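/- arXiv:1009.4501 — 4 statements merged into one kernel-verified Lean document; each statement's English description precedes it below -/
import Mathlib

section
/- Let Ω and Ω̃ be open subsets of ℝ³ and F : Ω → Ω̃ a C² diffeomorphism with det DF(y) > 0 for all y ∈ Ω; write M(y) = DF(y). Let ω > 0, let μ, ε, σ : Ω → ℂ^{3×3} and J : Ω → ℂ³ be continuous, and let E, H : Ω → ℂ³ be C¹ vector fields satisfying, pointwise on Ω, curl E = iωμH and curl H = −iω(ε + i σ/ω)E + J. Define on Ω̃ the pull-back fields Ẽ(x) = (M(y)ᵀ)⁻¹E(y), H̃(x) = (M(y)ᵀ)⁻¹H(y), the transformed current J̃(x) = (1/det M(y)) M(y) J(y), and the push-forward coefficients μ̃(x) = M(y) μ(y) M(y)ᵀ / det M(y), ε̃(x) = M(y) ε(y) M(y)ᵀ / det M(y), σ̃(x) = M(y) σ(y) M(y)ᵀ / det M(y), where y = F⁻¹(x). Then, pointwise on Ω̃, curl Ẽ = iωμ̃H̃ and curl H̃ = −iω(ε̃ + i σ̃/ω)Ẽ + J̃. -/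
/-!
Write `B = DG = M⁻¹`. The transformed field `Ṽ = Bᵀ (V ∘ G)` has Jacobian
`Bᵀ (DV ∘ G) B + ∑ₚ (Vₚ ∘ G) D²Gₚ`, and the second term is symmetric by equality of mixed
partials. The curl is the axial vector of the antisymmetric part of the Jacobian, and
`axial (Bᵀ N B) = adj B · axial N`, so `curl Ṽ = adj B (curl V ∘ G) = M (curl V ∘ G) / det M`.
On the other side `M N Mᵀ (Mᵀ)⁻¹ v = M N v`, so the push-forward coefficients acting on the
transformed fields produce the same factor `M / det M`, and both Maxwell equations carry over.
-/

/-- The Jacobian matrix of a map `F : ℝ³ → ℝ³` at a point `y`. -/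
noncomputable def jac (F : (Fin 3 → ℝ) → (Fin 3 → ℝ)) (y : Fin 3 → ℝ) :
    Matrix (Fin 3) (Fin 3) ℝ :=
  Matrix.of fun i j => fderiv ℝ F y (Pi.single j 1) i

/-- Partial derivative `∂ᵢ g` of a scalar (complex-valued) function on ℝ³. -/
noncomputable def pd (i : Fin 3) (g : (Fin 3 → ℝ) → ℂ) (x : Fin 3 → ℝ) : ℂ :=
  fderiv ℝ g x (Pi.single i 1)

/-- The curl of a complex vector field on ℝ³. -/
noncomputable def curl3 (E : (Fin 3 → ℝ) → (Fin 3 → ℂ)) (x : Fin 3 → ℝ) : Fin 3 → ℂ :=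
  ![pd 1 (fun y => E y 2) x - pd 2 (fun y => E y 1) x,
    pd 2 (fun y => E y 0) x - pd 0 (fun y => E y 2) x,
    pd 0 (fun y => E y 1) x - pd 1 (fun y => E y 0) x]

/-- A real 3×3 matrix acting componentwise on ℂ³. -/
noncomputable def mulVecC (M : Matrix (Fin 3) (Fin 3) ℝ) (v : Fin 3 → ℂ) : Fin 3 → ℂ :=
  (M.map (fun a => (a : ℂ))).mulVec v

/-- A real 3×3 matrix viewed as a complex matrix. -/
noncomputable def toC (M : Matrix (Fin 3) (Fin 3) ℝ) : Matrix (Fin 3) (Fin 3) ℂ :=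
  M.map (fun a => (a : ℂ))

open Filter Topology
open scoped Matrix

section axialVec
variable {R : Type*} [CommRing R]

def axialVec (N : Matrix (Fin 3) (Fin 3) R) : Fin 3 → R :=
  ![N 2 1 - N 1 2, N 0 2 - N 2 0, N 1 0 - N 0 1]

theorem axialVec_add_of_isSymm {N S : Matrix (Fin 3) (Fin 3) R} (hS : S.IsSymm) :
    axialVec (N + S) = axialVec N := by
  have h (i j : Fin 3) : S i j = S j i := hS.apply j i
  ext k
  fin_cases k <;> simp [axialVec, h 2 1, h 0 2, h 1 0]

theorem axialVec_transpose_mul_mul (A N : Matrix (Fin 3) (Fin 3) R) :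
    axialVec (Aᵀ * N * A) = A.adjugate *ᵥ axialVec N := by
  ext k
  fin_cases k <;>
  · simp only [axialVec, Matrix.mul_apply, Matrix.transpose_apply, Fin.sum_univ_three,
      Matrix.mulVec, dotProduct, Matrix.adjugate_fin_three, Matrix.of_apply, Matrix.cons_val',
      Matrix.cons_val_fin_one, Matrix.cons_val_zero, Matrix.cons_val_one, Matrix.cons_val,
      Fin.zero_eta, Fin.mk_one, Fin.reduceFinMk, Fin.isValue]
    ring

end axialVec

theorem Matrix.adjugate_eq_det_inv_smul_of_mul_eq_one {n K : Type*} [Fintype n] [DecidableEq n]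
    [Field K] {M B : Matrix n n K} (h : M * B = 1) : B.adjugate = M.det⁻¹ • M := by
  have hdet : B.det = M.det⁻¹ :=
    eq_inv_of_mul_eq_one_right (by rw [← Matrix.det_mul, h, Matrix.det_one])
  calc B.adjugate = M * (B * B.adjugate) := by rw [← Matrix.mul_assoc, h, Matrix.one_mul]
    _ = M.det⁻¹ • M := by rw [Matrix.mul_adjugate, hdet, Matrix.mul_smul, Matrix.mul_one]

theorem ContinuousLinearMap.apply_eq_sum_single {ι M : Type*} [Fintype ι] [DecidableEq ι]
    [AddCommMonoid M] [Module ℝ M] [TopologicalSpace M] (L : (ι → ℝ) →L[ℝ] M) (v : ι → ℝ) :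
    L v = ∑ q, v q • L (Pi.single q 1) := by
  conv_lhs => rw [← Finset.univ_sum_single v]
  rw [map_sum]
  refine Finset.sum_congr rfl fun q _ => ?_
  rw [← map_smul, ← Pi.single_smul, smul_eq_mul, mul_one]

theorem toC_mul (M N : Matrix (Fin 3) (Fin 3) ℝ) : toC (M * N) = toC M * toC N :=
  map_mul Complex.ofRealHom.mapMatrix M N

theorem toC_one : toC 1 = 1 :=
  map_one Complex.ofRealHom.mapMatrix

theorem toC_transpose (M : Matrix (Fin 3) (Fin 3) ℝ) : toC Mᵀ = (toC M)ᵀ :=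
  Matrix.transpose_map

theorem toC_adjugate (M : Matrix (Fin 3) (Fin 3) ℝ) : toC M.adjugate = (toC M).adjugate :=
  Complex.ofRealHom.map_adjugate M

theorem mulVecC_eq_toC_mulVec (M : Matrix (Fin 3) (Fin 3) ℝ) (v : Fin 3 → ℂ) :
    mulVecC M v = toC M *ᵥ v :=
  rfl

theorem mulVecC_real_smul (r : ℝ) (M : Matrix (Fin 3) (Fin 3) ℝ) (v : Fin 3 → ℂ) :
    mulVecC (r • M) v = (r : ℂ) • mulVecC M v := by
  rw [mulVecC, mulVecC, ← Matrix.smul_mulVec]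
  congr 1
  ext i j
  simp

section jac
variable {F G : (Fin 3 → ℝ) → (Fin 3 → ℝ)} {x : Fin 3 → ℝ}

theorem jac_eq_toMatrix' (y : Fin 3 → ℝ) :
    jac F y = LinearMap.toMatrix' (fderiv ℝ F y : (Fin 3 → ℝ) →ₗ[ℝ] (Fin 3 → ℝ)) := by
  ext i j
  rfl

theorem jac_mul_jac_eq_one (hF : DifferentiableAt ℝ F (G x)) (hG : DifferentiableAt ℝ G x)
    (hFG : ∀ᶠ y in 𝓝 x, F (G y) = y) : jac F (G x) * jac G x = 1 := by
  have hid : fderiv ℝ (F ∘ G) x = ContinuousLinearMap.id ℝ _ := by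
    rw [(show F ∘ G =ᶠ[𝓝 x] id from hFG).fderiv_eq, fderiv_id]
  rw [jac_eq_toMatrix', jac_eq_toMatrix', ← LinearMap.toMatrix'_comp,
    ← ContinuousLinearMap.toLinearMap_comp, ← fderiv_comp x hF hG, hid]
  exact LinearMap.toMatrix'_id

theorem hasFDerivAt_jac_apply (hG : DifferentiableAt ℝ (fderiv ℝ G) x) (p i : Fin 3) :
    HasFDerivAt (fun y => (jac G y p i : ℂ)) (Complex.ofRealCLM ∘L
      ((ContinuousLinearMap.proj p ∘L ContinuousLinearMap.apply ℝ _ (Pi.single i 1)) ∘L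
        fderiv ℝ (fderiv ℝ G) x)) x := by
  have h := (ContinuousLinearMap.proj p ∘L
    ContinuousLinearMap.apply ℝ (Fin 3 → ℝ) (Pi.single i 1)).hasFDerivAt.comp x hG.hasFDerivAt
  exact Complex.ofRealCLM.hasFDerivAt.comp x h

end jac

section pd
variable {f g : (Fin 3 → ℝ) → ℂ} {x : Fin 3 → ℝ}

theorem pd_congr (h : f =ᶠ[𝓝 x] g) (i : Fin 3) : pd i f x = pd i g x := by
  rw [pd, pd, h.fderiv_eq]

theorem pd_mul (hf : DifferentiableAt ℝ f x) (hg : DifferentiableAt ℝ g x) (i : Fin 3) :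
    pd i (fun y => f y * g y) x = pd i f x * g x + f x * pd i g x := by
  simp only [pd, fderiv_fun_mul hf hg, _root_.add_apply, _root_.smul_apply, smul_eq_mul]
  ring

theorem pd_sum {ι : Type*} {s : Finset ι} {f : ι → (Fin 3 → ℝ) → ℂ}
    (hf : ∀ k ∈ s, DifferentiableAt ℝ (f k) x) (i : Fin 3) :
    pd i (fun y => ∑ k ∈ s, f k y) x = ∑ k ∈ s, pd i (f k) x := by
  simp only [pd, fderiv_fun_sum hf, _root_.sum_apply]

theorem pd_comp {G : (Fin 3 → ℝ) → (Fin 3 → ℝ)} (hg : DifferentiableAt ℝ g (G x))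
    (hG : DifferentiableAt ℝ G x) (j : Fin 3) :
    pd j (fun y => g (G y)) x = ∑ q, (jac G x q j : ℂ) * pd q g (G x) := by
  rw [pd, fderiv_fun_comp x hg hG, ContinuousLinearMap.comp_apply,
    (fderiv ℝ g (G x)).apply_eq_sum_single]
  simp only [Complex.real_smul, jac, Matrix.of_apply, pd]

theorem pd_jac_apply_comm {G : (Fin 3 → ℝ) → (Fin 3 → ℝ)} (hG : ContDiffAt ℝ 2 G x)
    (p i j : Fin 3) :
    pd j (fun y => (jac G y p i : ℂ)) x = pd i (fun y => (jac G y p j : ℂ)) x := by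
  have hdG : DifferentiableAt ℝ (fderiv ℝ G) x :=
    (hG.fderiv_right (m := 1) le_rfl).differentiableAt one_ne_zero
  have hsymm : IsSymmSndFDerivAt ℝ G x :=
    hG.isSymmSndFDerivAt (by simp [minSmoothness_of_isRCLikeNormedField])
  simp [pd, (hasFDerivAt_jac_apply hdG p _).fderiv, hsymm (Pi.single i 1) (Pi.single j 1)]

end pd

noncomputable def jacC (V : (Fin 3 → ℝ) → (Fin 3 → ℂ)) (x : Fin 3 → ℝ) :
    Matrix (Fin 3) (Fin 3) ℂ :=
  Matrix.of fun p q => pd q (fun y => V y p) x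

theorem curl3_eq_axialVec_jacC (V : (Fin 3 → ℝ) → (Fin 3 → ℂ)) (x : Fin 3 → ℝ) :
    curl3 V x = axialVec (jacC V x) :=
  rfl

theorem curl3_congr {V W : (Fin 3 → ℝ) → (Fin 3 → ℂ)} {x : Fin 3 → ℝ} (h : V =ᶠ[𝓝 x] W) :
    curl3 V x = curl3 W x := by
  have hc (i : Fin 3) : (fun y => V y i) =ᶠ[𝓝 x] fun y => W y i :=
    h.mono fun y hy => congrFun hy i
  simp only [curl3, pd_congr (hc _)]

noncomputable def pullback (G : (Fin 3 → ℝ) → (Fin 3 → ℝ)) (V : (Fin 3 → ℝ) → (Fin 3 → ℂ))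
    (x : Fin 3 → ℝ) : Fin 3 → ℂ :=
  mulVecC (jac G x)ᵀ (V (G x))

section pullback
variable {G : (Fin 3 → ℝ) → (Fin 3 → ℝ)} {V : (Fin 3 → ℝ) → (Fin 3 → ℂ)} {x : Fin 3 → ℝ}

theorem pullback_apply (i : Fin 3) :
    pullback G V x i = ∑ p, (jac G x p i : ℂ) * V (G x) p := by
  simp [pullback, mulVecC, Matrix.mulVec, dotProduct]

theorem jacC_pullback (hG : ContDiffAt ℝ 2 G x) (hV : DifferentiableAt ℝ V (G x)) :
    jacC (pullback G V) x = (toC (jac G x))ᵀ * jacC V (G x) * toC (jac G x) +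
      Matrix.of fun i j => ∑ p, pd j (fun y => (jac G y p i : ℂ)) x * V (G x) p := by
  have hdG : DifferentiableAt ℝ (fderiv ℝ G) x :=
    (hG.fderiv_right (m := 1) le_rfl).differentiableAt one_ne_zero
  have hGx : DifferentiableAt ℝ G x := hG.differentiableAt two_ne_zero
  have hVp (p : Fin 3) : DifferentiableAt ℝ (fun y => V y p) (G x) := differentiableAt_pi.mp hV p
  ext i j
  have hterm (p : Fin 3) : pd j (fun y => (jac G y p i : ℂ) * V (G y) p) x =
      pd j (fun y => (jac G y p i : ℂ)) x * V (G x) p +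
        (jac G x p i : ℂ) * ∑ q, (jac G x q j : ℂ) * pd q (fun y => V y p) (G x) := by
    rw [pd_mul (f := fun y => (jac G y p i : ℂ)) (g := fun y => V (G y) p)
      (hasFDerivAt_jac_apply hdG p i).differentiableAt ((hVp p).comp x hGx), pd_comp (hVp p) hGx]
  simp only [jacC, pullback_apply, Matrix.of_apply]
  rw [pd_sum (f := fun p y => (jac G y p i : ℂ) * V (G y) p)
    fun p _ => (hasFDerivAt_jac_apply hdG p i).differentiableAt.mul ((hVp p).comp x hGx)]
  simp only [hterm, Finset.sum_add_distrib, Fin.sum_univ_three, toC, Matrix.add_apply,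
    Matrix.mul_apply, Matrix.transpose_apply, Matrix.map_apply, Matrix.of_apply]
  ring

theorem curl3_pullback (hG : ContDiffAt ℝ 2 G x) (hV : DifferentiableAt ℝ V (G x)) :
    curl3 (pullback G V) x = mulVecC (jac G x).adjugate (curl3 V (G x)) := by
  have hsymm :
      (Matrix.of fun i j => ∑ p, pd j (fun y => (jac G y p i : ℂ)) x * V (G x) p).IsSymm :=
    Matrix.IsSymm.ext fun i j => by simp only [Matrix.of_apply, pd_jac_apply_comm hG]
  rw [curl3_eq_axialVec_jacC, jacC_pullback hG hV, axialVec_add_of_isSymm hsymm,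
    axialVec_transpose_mul_mul, mulVecC_eq_toC_mulVec, toC_adjugate, curl3_eq_axialVec_jacC]

end pullback

theorem curl3_transform {Ωt : Set (Fin 3 → ℝ)} (hΩt : IsOpen Ωt)
    {F G : (Fin 3 → ℝ) → (Fin 3 → ℝ)} (hG : ContDiffOn ℝ 2 G Ωt)
    (hFG : ∀ x ∈ Ωt, jac F (G x) * jac G x = 1) {V Vt : (Fin 3 → ℝ) → (Fin 3 → ℂ)}
    (hV : ∀ x ∈ Ωt, DifferentiableAt ℝ V (G x))
    (hVt : ∀ x ∈ Ωt, Vt x = mulVecC ((jac F (G x))ᵀ)⁻¹ (V (G x))) {x : Fin 3 → ℝ}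
    (hx : x ∈ Ωt) :
    curl3 Vt x = ((jac F (G x)).det : ℂ)⁻¹ • mulVecC (jac F (G x)) (curl3 V (G x)) := by
  have hpullback : Vt =ᶠ[𝓝 x] pullback G V := by
    filter_upwards [hΩt.mem_nhds hx] with y hy
    rw [hVt y hy, Matrix.inv_eq_left_inv (by rw [← Matrix.transpose_mul, hFG y hy,
      Matrix.transpose_one]), pullback]
  rw [curl3_congr hpullback, curl3_pullback (hG.contDiffAt (hΩt.mem_nhds hx)) (hV x hx),
    Matrix.adjugate_eq_det_inv_smul_of_mul_eq_one (hFG x hx), mulVecC_real_smul,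
    Complex.ofReal_inv]

noncomputable def pushforward (M : Matrix (Fin 3) (Fin 3) ℝ) (N : Matrix (Fin 3) (Fin 3) ℂ) :
    Matrix (Fin 3) (Fin 3) ℂ :=
  ((M.det : ℂ))⁻¹ • (toC M * N * (toC M)ᵀ)

theorem pushforward_add_smul (M : Matrix (Fin 3) (Fin 3) ℝ) (N₁ N₂ : Matrix (Fin 3) (Fin 3) ℂ)
    (c : ℂ) : pushforward M N₁ + c • pushforward M N₂ = pushforward M (N₁ + c • N₂) := by
  simp only [pushforward]
  rw [smul_comm, ← smul_add, Matrix.mul_add, Matrix.add_mul, Matrix.mul_smul, Matrix.smul_mul]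

theorem pushforward_mulVec {M : Matrix (Fin 3) (Fin 3) ℝ} (hM : IsUnit M.det)
    (N : Matrix (Fin 3) (Fin 3) ℂ) (v : Fin 3 → ℂ) :
    pushforward M N *ᵥ mulVecC (Mᵀ)⁻¹ v = ((M.det : ℂ))⁻¹ • mulVecC M (N *ᵥ v) := by
  have hinv : (toC M)ᵀ * toC (Mᵀ)⁻¹ = 1 := by
    rw [← toC_transpose, ← toC_mul, Matrix.mul_nonsing_inv _ (by rwa [Matrix.det_transpose]),
      toC_one]
  rw [pushforward, Matrix.smul_mulVec, mulVecC_eq_toC_mulVec, mulVecC_eq_toC_mulVec,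
    Matrix.mulVec_mulVec, Matrix.mul_assoc, hinv, Matrix.mul_one, Matrix.mulVec_mulVec]

theorem maxwell_transformation_general
    (Ω Ωt : Set (Fin 3 → ℝ)) (hΩ : IsOpen Ω) (hΩt : IsOpen Ωt)
    (F G : (Fin 3 → ℝ) → (Fin 3 → ℝ))
    (hF : ContDiffOn ℝ 2 F Ω) (hG : ContDiffOn ℝ 2 G Ωt)
    (hGmaps : Set.MapsTo G Ωt Ω)
    (hFG : ∀ x ∈ Ωt, F (G x) = x)
    (ω : ℝ)
    (μ ε σ : (Fin 3 → ℝ) → Matrix (Fin 3) (Fin 3) ℂ)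
    (J : (Fin 3 → ℝ) → (Fin 3 → ℂ))
    (E H : (Fin 3 → ℝ) → (Fin 3 → ℂ))
    (hE : ContDiffOn ℝ 1 E Ω) (hH : ContDiffOn ℝ 1 H Ω)
    (maxwell1 : ∀ y ∈ Ω, curl3 E y = (Complex.I * ω) • (μ y).mulVec (H y))
    (maxwell2 : ∀ y ∈ Ω, curl3 H y =
      (-(Complex.I * ω)) • ((ε y + (Complex.I * (ω : ℂ)⁻¹) • σ y).mulVec (E y)) + J y)
    (Et Ht Jt : (Fin 3 → ℝ) → (Fin 3 → ℂ))
    (μt εt σt : (Fin 3 → ℝ) → Matrix (Fin 3) (Fin 3) ℂ)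
    (hEt : ∀ x ∈ Ωt, Et x = mulVecC ((jac F (G x)).transpose)⁻¹ (E (G x)))
    (hHt : ∀ x ∈ Ωt, Ht x = mulVecC ((jac F (G x)).transpose)⁻¹ (H (G x)))
    (hJt : ∀ x ∈ Ωt, Jt x =
      (((jac F (G x)).det : ℂ))⁻¹ • mulVecC (jac F (G x)) (J (G x)))
    (hμt : ∀ x ∈ Ωt, μt x = (((jac F (G x)).det : ℂ))⁻¹ •
      (toC (jac F (G x)) * μ (G x) * (toC (jac F (G x))).transpose))
    (hεt : ∀ x ∈ Ωt, εt x = (((jac F (G x)).det : ℂ))⁻¹ •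
      (toC (jac F (G x)) * ε (G x) * (toC (jac F (G x))).transpose))
    (hσt : ∀ x ∈ Ωt, σt x = (((jac F (G x)).det : ℂ))⁻¹ •
      (toC (jac F (G x)) * σ (G x) * (toC (jac F (G x))).transpose)) :
    (∀ x ∈ Ωt, curl3 Et x = (Complex.I * ω) • (μt x).mulVec (Ht x)) ∧
    (∀ x ∈ Ωt, curl3 Ht x =
      (-(Complex.I * ω)) • ((εt x + (Complex.I * (ω : ℂ)⁻¹) • σt x).mulVec (Et x)) + Jt x) := by
  have hMB (x : Fin 3 → ℝ) (hx : x ∈ Ωt) : jac F (G x) * jac G x = 1 :=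
    jac_mul_jac_eq_one ((hF.contDiffAt (hΩ.mem_nhds (hGmaps hx))).differentiableAt two_ne_zero)
      ((hG.contDiffAt (hΩt.mem_nhds hx)).differentiableAt two_ne_zero)
      (eventually_of_mem (hΩt.mem_nhds hx) hFG)
  have hM (x : Fin 3 → ℝ) (hx : x ∈ Ωt) : IsUnit (jac F (G x)).det :=
    Matrix.isUnit_det_of_right_inverse (hMB x hx)
  have hdiff {V : (Fin 3 → ℝ) → (Fin 3 → ℂ)} (hV : ContDiffOn ℝ 1 V Ω) (x : Fin 3 → ℝ)
      (hx : x ∈ Ωt) : DifferentiableAt ℝ V (G x) :=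
    (hV.contDiffAt (hΩ.mem_nhds (hGmaps hx))).differentiableAt one_ne_zero
  refine ⟨fun x hx => ?_, fun x hx => ?_⟩
  · rw [curl3_transform hΩt hG hMB (hdiff hE) hEt hx, maxwell1 _ (hGmaps hx), hHt x hx,
      show μt x = pushforward _ _ from hμt x hx, pushforward_mulVec (hM x hx)]
    simp only [mulVecC_eq_toC_mulVec, Matrix.mulVec_smul]
    exact smul_comm _ _ _
  · rw [curl3_transform hΩt hG hMB (hdiff hH) hHt hx, maxwell2 _ (hGmaps hx), hEt x hx,
      hJt x hx, show εt x = pushforward _ _ from hεt x hx,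
      show σt x = pushforward _ _ from hσt x hx, pushforward_add_smul, pushforward_mulVec (hM x hx)]
    simp only [mulVecC_eq_toC_mulVec, Matrix.mulVec_add, Matrix.mulVec_smul, smul_add]
    rw [smul_comm]

/-- Transformation invariance of time-harmonic Maxwell's equations:
if `(E,H)` solve `curl E = iωμH`, `curl H = −iω(ε + iσ/ω)E + J` on `Ω` and
`F : Ω → Ω̃` is a C² orientation-preserving diffeomorphism (with inverse `G`),
then the pull-back fields `Ẽ, H̃` solve the Maxwell system on `Ω̃` with the
push-forward coefficients `μ̃, ε̃, σ̃` and transformed current `J̃`. -/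
theorem maxwell_transformation
    (Ω Ωt : Set (Fin 3 → ℝ)) (hΩ : IsOpen Ω) (hΩt : IsOpen Ωt)
    (F G : (Fin 3 → ℝ) → (Fin 3 → ℝ))
    (hF : ContDiffOn ℝ 2 F Ω) (hG : ContDiffOn ℝ 2 G Ωt)
    (hFmaps : Set.MapsTo F Ω Ωt) (hGmaps : Set.MapsTo G Ωt Ω)
    (hGF : ∀ y ∈ Ω, G (F y) = y) (hFG : ∀ x ∈ Ωt, F (G x) = x)
    (hdet : ∀ y ∈ Ω, 0 < (jac F y).det)
    (ω : ℝ) (hω : 0 < ω)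
    (μ ε σ : (Fin 3 → ℝ) → Matrix (Fin 3) (Fin 3) ℂ)
    (J : (Fin 3 → ℝ) → (Fin 3 → ℂ))
    (hμ : ContinuousOn μ Ω) (hε : ContinuousOn ε Ω) (hσ : ContinuousOn σ Ω)
    (hJ : ContinuousOn J Ω)
    (E H : (Fin 3 → ℝ) → (Fin 3 → ℂ))
    (hE : ContDiffOn ℝ 1 E Ω) (hH : ContDiffOn ℝ 1 H Ω)
    (maxwell1 : ∀ y ∈ Ω, curl3 E y = (Complex.I * ω) • (μ y).mulVec (H y))
    (maxwell2 : ∀ y ∈ Ω, curl3 H y =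
      (-(Complex.I * ω)) • ((ε y + (Complex.I * (ω : ℂ)⁻¹) • σ y).mulVec (E y)) + J y)
    (Et Ht Jt : (Fin 3 → ℝ) → (Fin 3 → ℂ))
    (μt εt σt : (Fin 3 → ℝ) → Matrix (Fin 3) (Fin 3) ℂ)
    (hEt : ∀ x ∈ Ωt, Et x = mulVecC ((jac F (G x)).transpose)⁻¹ (E (G x)))
    (hHt : ∀ x ∈ Ωt, Ht x = mulVecC ((jac F (G x)).transpose)⁻¹ (H (G x)))
    (hJt : ∀ x ∈ Ωt, Jt x =
      (((jac F (G x)).det : ℂ))⁻¹ • mulVecC (jac F (G x)) (J (G x)))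
    (hμt : ∀ x ∈ Ωt, μt x = (((jac F (G x)).det : ℂ))⁻¹ •
      (toC (jac F (G x)) * μ (G x) * (toC (jac F (G x))).transpose))
    (hεt : ∀ x ∈ Ωt, εt x = (((jac F (G x)).det : ℂ))⁻¹ •
      (toC (jac F (G x)) * ε (G x) * (toC (jac F (G x))).transpose))
    (hσt : ∀ x ∈ Ωt, σt x = (((jac F (G x)).det : ℂ))⁻¹ •
      (toC (jac F (G x)) * σ (G x) * (toC (jac F (G x))).transpose)) :
    (∀ x ∈ Ωt, curl3 Et x = (Complex.I * ω) • (μt x).mulVec (Ht x)) ∧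
    (∀ x ∈ Ωt, curl3 Ht x =
      (-(Complex.I * ω)) • ((εt x + (Complex.I * (ω : ℂ)⁻¹) • σt x).mulVec (Et x)) + Jt x) :=
  maxwell_transformation_general Ω Ωt hΩ hΩt F G hF hG hGmaps hFG ω μ ε σ J E H hE hH maxwell1
    maxwell2 Et Ht Jt μt εt σt hEt hHt hJt hμt hεt hσt
end

section
/- Fix ω > 0, ε₀ > 0, μ₀ > 0, an integer n ≥ 1, and set k = (ε₀μ₀)^{1/2}; assume j_n(kω) ≠ 0. Then, as ρ → 0⁺, the transmission ratios satisfy t₁(ρ) = O(ρ^{2n+1}), t₂(ρ) = O(ρ^{n+1}), t₃(ρ) = O(ρ^{2n+1}), and t₄(ρ) = O(ρ^{n+1}); in particular the denominators of t₁(ρ),…,t₄(ρ) are nonzero for all sufficiently small ρ > 0. -/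
/-- The operator `f ↦ (z ↦ f′(z)/z)` used in the Rayleigh formulas. -/
noncomputable def sphDOp (f : ℂ → ℂ) : ℂ → ℂ := fun z => deriv f z / z

/-- Spherical Bessel function of the first kind:
`j_n(z) = (−z)^n (z⁻¹ d/dz)^n (sin z / z)`. -/
noncomputable def sbj (n : ℕ) (z : ℂ) : ℂ :=
  (-z) ^ n * sphDOp^[n] (fun w => Complex.sin w / w) z

/-- Spherical Bessel function of the second kind:
`y_n(z) = −(−z)^n (z⁻¹ d/dz)^n (cos z / z)`. -/
noncomputable def sby (n : ℕ) (z : ℂ) : ℂ :=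
  -((-z) ^ n * sphDOp^[n] (fun w => Complex.cos w / w) z)

/-- Spherical Hankel function of the first kind `h_n = j_n + i y_n`. -/
noncomputable def sbh (n : ℕ) (z : ℂ) : ℂ := sbj n z + Complex.I * sby n z

/-- `𝒥_n(z) = j_n(z) + z j_n′(z)`. -/
noncomputable def sbJ (n : ℕ) (z : ℂ) : ℂ := sbj n z + z * deriv (sbj n) z

/-- `𝓗_n(z) = h_n(z) + z h_n′(z)`. -/
noncomputable def sbH (n : ℕ) (z : ℂ) : ℂ := sbh n z + z * deriv (sbh n) z

/-- `x^{−1/2}` for a positive real `x`, as a complex number. -/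
noncomputable def invSqrtC (x : ℝ) : ℂ := ((Real.sqrt x)⁻¹ : ℝ)

/-- `g(ρ) = O(ρ^s)` as `ρ → 0⁺`. -/
def IsBigORho (g : ℝ → ℂ) (s : ℝ) : Prop :=
  ∃ C : ℝ, 0 < C ∧ ∃ δ : ℝ, 0 < δ ∧
    ∀ ρ : ℝ, 0 < ρ → ρ < δ → ‖g ρ‖ ≤ C * ρ ^ s

/-- The transmission ratio `t₁(ρ)` for the `n`-th mode of the regularized lossless
cloaking problem. -/
noncomputable def t1 (n : ℕ) (ω ε₀ μ₀ k ρ : ℝ) : ℂ :=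
  (invSqrtC ε₀ * (k : ℂ) * sbJ n ((ω * ρ : ℝ) : ℂ) * sbj n ((k * ω : ℝ) : ℂ)
      - invSqrtC μ₀ * (ρ : ℂ) * sbj n ((ω * ρ : ℝ) : ℂ) * sbJ n ((k * ω : ℝ) : ℂ)) /
  (invSqrtC μ₀ * (ρ : ℂ) * sbh n ((ω * ρ : ℝ) : ℂ) * sbJ n ((k * ω : ℝ) : ℂ)
      - invSqrtC ε₀ * (k : ℂ) * sbH n ((ω * ρ : ℝ) : ℂ) * sbj n ((k * ω : ℝ) : ℂ))

/-- The transmission ratio `t₂(ρ)`. -/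
noncomputable def t2 (n : ℕ) (ω ε₀ μ₀ k ρ : ℝ) : ℂ :=
  ((k : ℂ) * (ρ : ℂ) * sbJ n ((ω * ρ : ℝ) : ℂ) * sbh n ((ω * ρ : ℝ) : ℂ)
      - (k : ℂ) * (ρ : ℂ) * sbj n ((ω * ρ : ℝ) : ℂ) * sbH n ((ω * ρ : ℝ) : ℂ)) /
  (invSqrtC μ₀ * (ρ : ℂ) * sbJ n ((k * ω : ℝ) : ℂ) * sbh n ((ω * ρ : ℝ) : ℂ)
      - invSqrtC ε₀ * (k : ℂ) * sbj n ((k * ω : ℝ) : ℂ) * sbH n ((ω * ρ : ℝ) : ℂ))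

/-- The transmission ratio `t₃(ρ)`. -/
noncomputable def t3 (n : ℕ) (ω ε₀ μ₀ k ρ : ℝ) : ℂ :=
  (invSqrtC μ₀ * (k : ℂ) * sbJ n ((ω * ρ : ℝ) : ℂ) * sbj n ((k * ω : ℝ) : ℂ)
      - invSqrtC ε₀ * (ρ : ℂ) * sbj n ((ω * ρ : ℝ) : ℂ) * sbJ n ((k * ω : ℝ) : ℂ)) /
  (invSqrtC ε₀ * (ρ : ℂ) * sbh n ((ω * ρ : ℝ) : ℂ) * sbJ n ((k * ω : ℝ) : ℂ)
      - invSqrtC μ₀ * (k : ℂ) * sbH n ((ω * ρ : ℝ) : ℂ) * sbj n ((k * ω : ℝ) : ℂ))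

/-- The transmission ratio `t₄(ρ)`. -/
noncomputable def t4 (n : ℕ) (ω ε₀ μ₀ k ρ : ℝ) : ℂ :=
  ((ρ : ℂ) * sbJ n ((ω * ρ : ℝ) : ℂ) * sbh n ((ω * ρ : ℝ) : ℂ)
      - (ρ : ℂ) * sbj n ((ω * ρ : ℝ) : ℂ) * sbH n ((ω * ρ : ℝ) : ℂ)) /
  (invSqrtC ε₀ * (ρ : ℂ) * sbJ n ((k * ω : ℝ) : ℂ) * sbh n ((ω * ρ : ℝ) : ℂ)
      - invSqrtC μ₀ * (k : ℂ) * sbj n ((k * ω : ℝ) : ℂ) * sbH n ((ω * ρ : ℝ) : ℂ))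


/-!
Away from `z = 0` the spherical Bessel functions factor through entire functions
(`sbjReg`, `sbJReg`, `sbhReg`, `sbHReg`): `j_n(z) = zⁿ g(z)`, `𝒥_n(z) = zⁿ p(z)`,
`h_n(z) = φ(z) / z^(n+1)` and `𝓗_n(z) = ψ(z) / z^(n+1)` with `ψ = z φ' - n φ`. The first two
come from iterating `z⁻¹ d/dz` on the even entire function `sin z / z`; on `cos z / z` each step
lowers the order of the pole at `0` by two while keeping a nonvanishing leading coefficient, so
`φ(0) ≠ 0`, and hence `ψ(0) = -n φ(0) ≠ 0` as `n ≥ 1`.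

Multiplying the denominators of `t₁, …, t₄` by `(ωρ)^(n+1)` makes them continuous in `ρ`, with
value `-ε^(-1/2) k ψ(0) j_n(kω) ≠ 0` at `ρ = 0` (`ε = ε₀` or `μ₀`). What is left is `ρ^(2n+1)`
(for `t₁, t₃`) or `ρ^(n+1)` (for `t₂, t₄`) times a function continuous at `0`.
-/

open Complex Filter Topology Asymptotics

section OneVariable

variable {𝕜 : Type*} [NontriviallyNormedField 𝕜] {f F : 𝕜 → 𝕜} {m : ℤ} {z : 𝕜}

theorem deriv_eq_zpow_mul_of_eq (hF : DifferentiableAt 𝕜 F z)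
    (hf : ∀ w ≠ 0, f w = w ^ m * F w) (hz : z ≠ 0) :
    deriv f z = z ^ (m - 1) * (z * deriv F z + m * F z) := by
  have hev : f =ᶠ[𝓝 z] fun w => w ^ m * F w :=
    eventually_of_mem (isOpen_ne.mem_nhds hz) hf
  rw [hev.deriv_eq, ((hasDerivAt_zpow m z (Or.inl hz)).fun_mul hF.hasDerivAt).deriv,
    zpow_sub_one₀ hz]
  field_simp
  ring

theorem add_mul_deriv_eq_zpow_mul_of_eq (hF : DifferentiableAt 𝕜 F z)
    (hf : ∀ w ≠ 0, f w = w ^ m * F w) (hz : z ≠ 0) :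
    f z + z * deriv f z = z ^ m * (z * deriv F z + (m + 1) * F z) := by
  rw [hf z hz, deriv_eq_zpow_mul_of_eq hF hf hz, zpow_sub_one₀ hz]
  field_simp
  ring

theorem Function.Even.deriv_odd (hf : f.Even) : (deriv f).Odd := by
  intro z
  have h := deriv_comp_neg (f := f) (x := z)
  rw [show (fun x => f (-x)) = f from funext hf] at h
  rw [h, neg_neg]

theorem dslope_zero_of_map_zero (hf : f 0 = 0) (hz : z ≠ 0) : dslope f 0 z = f z / z := by
  simp [dslope_of_ne _ hz, slope_def_field, hf]

theorem Function.Even.dslope_deriv [CharZero 𝕜] (hf : f.Even) : (dslope (deriv f) 0).Even := by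
  have h0 := hf.deriv_odd.map_zero
  intro z
  rcases eq_or_ne z 0 with rfl | hz
  · rw [neg_zero]
  · rw [dslope_zero_of_map_zero h0 hz, dslope_zero_of_map_zero h0 (neg_ne_zero.2 hz),
      hf.deriv_odd, neg_div_neg_eq]

end OneVariable

theorem Differentiable.dslope {f : ℂ → ℂ} (hf : Differentiable ℂ f) (c : ℂ) :
    Differentiable ℂ (dslope f c) :=
  differentiableOn_univ.1 <| (differentiableOn_dslope univ_mem).2 hf.differentiableOn

noncomputable def sinReg : ℕ → ℂ → ℂ
  | 0 => dslope sin 0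
  | j + 1 => dslope (deriv (sinReg j)) 0

noncomputable def cosReg : ℕ → ℂ → ℂ
  | 0 => cos
  | j + 1 => fun z => z * deriv (cosReg j) z - (2 * j + 1) * cosReg j z

theorem differentiable_sinReg (j : ℕ) : Differentiable ℂ (sinReg j) := by
  induction j with
  | zero => exact differentiable_sin.dslope 0
  | succ j ih => exact ih.deriv.dslope 0

theorem even_sinReg (j : ℕ) : (sinReg j).Even := by
  induction j with
  | zero =>
    intro z
    rcases eq_or_ne z 0 with rfl | hz
    · rw [neg_zero]
    · simp only [sinReg]
      rw [dslope_zero_of_map_zero sin_zero hz,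
        dslope_zero_of_map_zero sin_zero (neg_ne_zero.2 hz), sin_neg, neg_div_neg_eq]
  | succ j ih => exact ih.dslope_deriv

theorem sphDOp_iterate_sin (j : ℕ) {z : ℂ} (hz : z ≠ 0) :
    sphDOp^[j] (fun w => sin w / w) z = sinReg j z := by
  induction j generalizing z with
  | zero => exact (dslope_zero_of_map_zero sin_zero hz).symm
  | succ j ih =>
    have hev : sphDOp^[j] (fun w => sin w / w) =ᶠ[𝓝 z] sinReg j :=
      eventually_of_mem (isOpen_ne.mem_nhds hz) fun w hw => ih hw
    rw [Function.iterate_succ_apply', sphDOp, hev.deriv_eq, sinReg,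
      dslope_zero_of_map_zero (even_sinReg j).deriv_odd.map_zero hz]

theorem differentiable_cosReg (j : ℕ) : Differentiable ℂ (cosReg j) := by
  induction j with
  | zero => exact differentiable_cos
  | succ j ih => exact (differentiable_id.mul ih.deriv).sub (ih.const_mul _)

theorem cosReg_zero_ne_zero (j : ℕ) : cosReg j 0 ≠ 0 := by
  induction j with
  | zero => simp [cosReg]
  | succ j ih =>
    simp only [cosReg, zero_mul, zero_sub, neg_ne_zero]
    exact mul_ne_zero (by norm_cast) ih

theorem sphDOp_iterate_cos (j : ℕ) {z : ℂ} (hz : z ≠ 0) :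
    sphDOp^[j] (fun w => cos w / w) z = z ^ (-(2 * j + 1 : ℕ) : ℤ) * cosReg j z := by
  induction j generalizing z with
  | zero => simp [cosReg, div_eq_inv_mul]
  | succ j ih =>
    rw [Function.iterate_succ_apply', sphDOp,
      deriv_eq_zpow_mul_of_eq ((differentiable_cosReg j) z) (fun w hw => ih hw) hz]
    have hexp : (-(2 * (j + 1) + 1 : ℕ) : ℤ) = (-(2 * j + 1 : ℕ) : ℤ) - 1 - 1 := by
      push_cast; ring
    rw [hexp, zpow_sub_one₀ hz (_ - 1)]
    generalize z ^ ((-(2 * j + 1 : ℕ) : ℤ) - 1) = c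
    simp only [cosReg]
    push_cast
    field_simp
    ring

noncomputable def sbjReg (n : ℕ) (z : ℂ) : ℂ := (-1) ^ n * sinReg n z

noncomputable def sbJReg (n : ℕ) (z : ℂ) : ℂ := z * deriv (sbjReg n) z + (n + 1) * sbjReg n z

noncomputable def sbhReg (n : ℕ) (z : ℂ) : ℂ :=
  z ^ (2 * n + 1) * sbjReg n z - I * (-1) ^ n * cosReg n z

noncomputable def sbHReg (n : ℕ) (z : ℂ) : ℂ := z * deriv (sbhReg n) z - n * sbhReg n z

theorem differentiable_sbjReg (n : ℕ) : Differentiable ℂ (sbjReg n) :=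
  (differentiable_sinReg n).const_mul _

theorem differentiable_sbhReg (n : ℕ) : Differentiable ℂ (sbhReg n) :=
  ((differentiable_pow _).mul (differentiable_sbjReg n)).sub
    ((differentiable_cosReg n).const_mul _)

@[fun_prop]
theorem continuous_sbjReg (n : ℕ) : Continuous (sbjReg n) :=
  (differentiable_sbjReg n).continuous

@[fun_prop]
theorem continuous_sbhReg (n : ℕ) : Continuous (sbhReg n) :=
  (differentiable_sbhReg n).continuous

@[fun_prop]
theorem continuous_sbJReg (n : ℕ) : Continuous (sbJReg n) := by
  have := (differentiable_sbjReg n).deriv.continuous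
  unfold sbJReg
  fun_prop

@[fun_prop]
theorem continuous_sbHReg (n : ℕ) : Continuous (sbHReg n) := by
  have := (differentiable_sbhReg n).deriv.continuous
  unfold sbHReg
  fun_prop

theorem sbj_eq_pow_mul (n : ℕ) {z : ℂ} (hz : z ≠ 0) : sbj n z = z ^ n * sbjReg n z := by
  rw [sbj, sphDOp_iterate_sin n hz, sbjReg, neg_pow]
  ring

theorem sbJ_eq_pow_mul (n : ℕ) {z : ℂ} (hz : z ≠ 0) : sbJ n z = z ^ n * sbJReg n z := by
  have h := add_mul_deriv_eq_zpow_mul_of_eq (f := sbj n) (m := n) (differentiable_sbjReg n z)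
    (fun w hw => by rw [zpow_natCast, sbj_eq_pow_mul n hw]) hz
  rw [sbJ, h, zpow_natCast, sbJReg]
  push_cast
  ring

theorem sbh_eq_zpow_mul (n : ℕ) {z : ℂ} (hz : z ≠ 0) :
    sbh n z = z ^ (-(n + 1 : ℕ) : ℤ) * sbhReg n z := by
  rw [sbh, sby, sbj_eq_pow_mul n hz, sphDOp_iterate_cos n hz, sbhReg, zpow_neg, zpow_neg,
    zpow_natCast, zpow_natCast, neg_pow]
  field_simp
  ring

theorem sbh_eq_div (n : ℕ) {z : ℂ} (hz : z ≠ 0) : sbh n z = sbhReg n z / z ^ (n + 1) := by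
  rw [sbh_eq_zpow_mul n hz, zpow_neg, zpow_natCast, inv_mul_eq_div]

theorem sbH_eq_div (n : ℕ) {z : ℂ} (hz : z ≠ 0) : sbH n z = sbHReg n z / z ^ (n + 1) := by
  have h := add_mul_deriv_eq_zpow_mul_of_eq (differentiable_sbhReg n z)
    (fun w hw => sbh_eq_zpow_mul n hw) hz
  rw [sbH, h, zpow_neg, zpow_natCast, sbHReg]
  push_cast
  field_simp
  ring

theorem sbHReg_zero_ne_zero {n : ℕ} (hn : n ≠ 0) : sbHReg n 0 ≠ 0 := by
  simp [sbHReg, sbhReg, hn, cosReg_zero_ne_zero]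

theorem isBigO_pow_of_eq_pow_mul {g F : ℝ → ℂ} {m : ℕ} (hF : ContinuousAt F 0)
    (hg : ∀ ρ, 0 < ρ → g ρ = (ρ : ℂ) ^ m * F ρ) : g =O[𝓝[>] 0] fun ρ => ρ ^ m := by
  have hF1 : F =O[𝓝[>] 0] fun _ => (1 : ℝ) :=
    (hF.tendsto.isBigO_one ℝ).mono nhdsWithin_le_nhds
  have hpow : (fun ρ : ℝ => (ρ : ℂ) ^ m) =O[𝓝[>] 0] fun ρ => ρ ^ m :=
    isBigO_of_le _ fun ρ => by simp
  exact (hpow.mul hF1).congr' (eventually_mem_nhdsWithin.mono fun ρ hρ => (hg ρ hρ).symm)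
    (Eventually.of_forall fun ρ => mul_one _)

theorem IsBigORho.of_isBigO {g : ℝ → ℂ} {m : ℕ} (h : g =O[𝓝[>] 0] fun ρ => ρ ^ m) :
    IsBigORho g m := by
  obtain ⟨c, hc⟩ := h.bound
  obtain ⟨δ, hδ, hδc⟩ := (nhdsGT_basis 0).eventually_iff.1 hc
  refine ⟨max c 1, by positivity, δ, hδ, fun ρ hρ hρδ => ?_⟩
  calc ‖g ρ‖ ≤ c * ‖ρ ^ m‖ := hδc ⟨hρ, hρδ⟩
    _ ≤ max c 1 * ρ ^ (m : ℝ) := by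
      rw [Real.rpow_natCast, Real.norm_of_nonneg (by positivity)]
      gcongr
      exact le_max_left _ _

theorem invSqrtC_ne_zero {x : ℝ} (hx : 0 < x) : invSqrtC x ≠ 0 := by
  simp [invSqrtC, (Real.sqrt_pos.2 hx).ne']

section Transmission

variable (n : ℕ) (ω ε₀ μ₀ k : ℝ)

noncomputable def denReg (ρ : ℝ) : ℂ :=
  invSqrtC μ₀ * (ρ : ℂ) * sbhReg n ((ω * ρ : ℝ) : ℂ) * sbJ n ((k * ω : ℝ) : ℂ)
    - invSqrtC ε₀ * (k : ℂ) * sbHReg n ((ω * ρ : ℝ) : ℂ) * sbj n ((k * ω : ℝ) : ℂ)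

theorem continuous_denReg : Continuous (denReg n ω ε₀ μ₀ k) := by
  unfold denReg
  fun_prop

theorem t3_eq_t1 : t3 n ω ε₀ μ₀ k = t1 n ω μ₀ ε₀ k := rfl

variable {n ω ε₀ μ₀ k}

theorem denReg_zero_ne_zero (hε : 0 < ε₀) (hk : k ≠ 0) (hn : n ≠ 0)
    (hjk : sbj n ((k * ω : ℝ) : ℂ) ≠ 0) : denReg n ω ε₀ μ₀ k 0 ≠ 0 := by
  rw [denReg, mul_zero, ofReal_zero, mul_zero, zero_mul, zero_mul, zero_sub, neg_ne_zero]
  exact mul_ne_zero (mul_ne_zero (mul_ne_zero (invSqrtC_ne_zero hε) (ofReal_ne_zero.2 hk))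
    (sbHReg_zero_ne_zero hn)) hjk

theorem den_t1_eq_denReg_div {ρ : ℝ} (hz : ((ω * ρ : ℝ) : ℂ) ≠ 0) :
    invSqrtC μ₀ * (ρ : ℂ) * sbh n ((ω * ρ : ℝ) : ℂ) * sbJ n ((k * ω : ℝ) : ℂ)
      - invSqrtC ε₀ * (k : ℂ) * sbH n ((ω * ρ : ℝ) : ℂ) * sbj n ((k * ω : ℝ) : ℂ)
      = denReg n ω ε₀ μ₀ k ρ / ((ω * ρ : ℝ) : ℂ) ^ (n + 1) := by
  rw [denReg, sbh_eq_div n hz, sbH_eq_div n hz]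
  ring

theorem den_t2_eq_denReg_div {ρ : ℝ} (hz : ((ω * ρ : ℝ) : ℂ) ≠ 0) :
    invSqrtC μ₀ * (ρ : ℂ) * sbJ n ((k * ω : ℝ) : ℂ) * sbh n ((ω * ρ : ℝ) : ℂ)
      - invSqrtC ε₀ * (k : ℂ) * sbj n ((k * ω : ℝ) : ℂ) * sbH n ((ω * ρ : ℝ) : ℂ)
      = denReg n ω ε₀ μ₀ k ρ / ((ω * ρ : ℝ) : ℂ) ^ (n + 1) := by
  rw [denReg, sbh_eq_div n hz, sbH_eq_div n hz]
  ring

theorem eventually_dens_ne_zero (hω : ω ≠ 0) (hε : 0 < ε₀) (hk : k ≠ 0) (hn : n ≠ 0)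
    (hjk : sbj n ((k * ω : ℝ) : ℂ) ≠ 0) :
    ∀ᶠ ρ : ℝ in 𝓝[>] 0,
      invSqrtC μ₀ * (ρ : ℂ) * sbh n ((ω * ρ : ℝ) : ℂ) * sbJ n ((k * ω : ℝ) : ℂ)
        - invSqrtC ε₀ * (k : ℂ) * sbH n ((ω * ρ : ℝ) : ℂ) * sbj n ((k * ω : ℝ) : ℂ) ≠ 0 ∧
      invSqrtC μ₀ * (ρ : ℂ) * sbJ n ((k * ω : ℝ) : ℂ) * sbh n ((ω * ρ : ℝ) : ℂ)
        - invSqrtC ε₀ * (k : ℂ) * sbj n ((k * ω : ℝ) : ℂ) * sbH n ((ω * ρ : ℝ) : ℂ) ≠ 0 := by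
  filter_upwards [nhdsWithin_le_nhds <| (continuous_denReg n ω ε₀ μ₀ k).continuousAt.eventually_ne
    (denReg_zero_ne_zero hε hk hn hjk), self_mem_nhdsWithin] with ρ hD (hρ : 0 < ρ)
  have hz : ((ω * ρ : ℝ) : ℂ) ≠ 0 := by exact_mod_cast mul_ne_zero hω hρ.ne'
  rw [den_t1_eq_denReg_div hz, den_t2_eq_denReg_div hz]
  exact ⟨div_ne_zero hD (pow_ne_zero _ hz), div_ne_zero hD (pow_ne_zero _ hz)⟩

theorem t1_eq_pow_mul (hω : ω ≠ 0) {ρ : ℝ} (hρ : 0 < ρ) :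
    t1 n ω ε₀ μ₀ k ρ = (ρ : ℂ) ^ (2 * n + 1) * ((ω : ℂ) ^ (2 * n + 1) *
      (invSqrtC ε₀ * k * sbJReg n ((ω * ρ : ℝ) : ℂ) * sbj n ((k * ω : ℝ) : ℂ)
        - invSqrtC μ₀ * ρ * sbjReg n ((ω * ρ : ℝ) : ℂ) * sbJ n ((k * ω : ℝ) : ℂ))
      / denReg n ω ε₀ μ₀ k ρ) := by
  have hz : ((ω * ρ : ℝ) : ℂ) ≠ 0 := by exact_mod_cast mul_ne_zero hω hρ.ne'
  rw [t1, den_t1_eq_denReg_div hz, div_div_eq_mul_div, sbj_eq_pow_mul n hz, sbJ_eq_pow_mul n hz]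
  push_cast
  ring

theorem t2_eq_pow_mul (hω : ω ≠ 0) {ρ : ℝ} (hρ : 0 < ρ) :
    t2 n ω ε₀ μ₀ k ρ = (ρ : ℂ) ^ (n + 1) * ((k : ℂ) * (ω : ℂ) ^ n *
      (sbJReg n ((ω * ρ : ℝ) : ℂ) * sbhReg n ((ω * ρ : ℝ) : ℂ)
        - sbjReg n ((ω * ρ : ℝ) : ℂ) * sbHReg n ((ω * ρ : ℝ) : ℂ))
      / denReg n ω ε₀ μ₀ k ρ) := by
  have hz : ((ω * ρ : ℝ) : ℂ) ≠ 0 := by exact_mod_cast mul_ne_zero hω hρ.ne'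
  rw [t2, den_t2_eq_denReg_div hz, sbj_eq_pow_mul n hz, sbJ_eq_pow_mul n hz, sbh_eq_div n hz,
    sbH_eq_div n hz]
  field_simp
  push_cast
  ring

theorem t4_eq_inv_mul_t2 (hk : k ≠ 0) (ρ : ℝ) :
    t4 n ω ε₀ μ₀ k ρ = (k : ℂ)⁻¹ * t2 n ω μ₀ ε₀ k ρ := by
  have hk' : (k : ℂ) ≠ 0 := ofReal_ne_zero.2 hk
  rw [t2, t4, ← mul_div_assoc]
  congr 1
  field_simp

theorem isBigO_t1 (hω : ω ≠ 0) (hε : 0 < ε₀) (hk : k ≠ 0) (hn : n ≠ 0)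
    (hjk : sbj n ((k * ω : ℝ) : ℂ) ≠ 0) :
    (fun ρ => t1 n ω ε₀ μ₀ k ρ) =O[𝓝[>] 0] fun ρ => ρ ^ (2 * n + 1) := by
  refine isBigO_pow_of_eq_pow_mul ?_ fun ρ hρ => t1_eq_pow_mul hω hρ
  exact ContinuousAt.div (Continuous.continuousAt (by fun_prop))
    (continuous_denReg n ω ε₀ μ₀ k).continuousAt (denReg_zero_ne_zero hε hk hn hjk)

theorem isBigO_t2 (hω : ω ≠ 0) (hε : 0 < ε₀) (hk : k ≠ 0) (hn : n ≠ 0)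
    (hjk : sbj n ((k * ω : ℝ) : ℂ) ≠ 0) :
    (fun ρ => t2 n ω ε₀ μ₀ k ρ) =O[𝓝[>] 0] fun ρ => ρ ^ (n + 1) := by
  refine isBigO_pow_of_eq_pow_mul ?_ fun ρ hρ => t2_eq_pow_mul hω hρ
  exact ContinuousAt.div (Continuous.continuousAt (by fun_prop))
    (continuous_denReg n ω ε₀ μ₀ k).continuousAt (denReg_zero_ne_zero hε hk hn hjk)

end Transmission

/-- Asymptotics of the transmission ratios of the regularized lossless
EM cloaking problem: `t₁(ρ) = O(ρ^{2n+1})`, `t₂(ρ) = O(ρ^{n+1})`, `t₃(ρ) = O(ρ^{2n+1})`,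
`t₄(ρ) = O(ρ^{n+1})` as `ρ → 0⁺`; in particular the denominators are nonzero for all
sufficiently small `ρ > 0`. -/
theorem transmission_ratios_asymptotics
    (ω ε₀ μ₀ : ℝ) (hω : 0 < ω) (hε : 0 < ε₀) (hμ : 0 < μ₀)
    (n : ℕ) (hn : 1 ≤ n) (k : ℝ) (hk : k = Real.sqrt (ε₀ * μ₀))
    (hjk : sbj n ((k * ω : ℝ) : ℂ) ≠ 0) :
    IsBigORho (fun ρ => t1 n ω ε₀ μ₀ k ρ) (2 * (n : ℝ) + 1) ∧
    IsBigORho (fun ρ => t2 n ω ε₀ μ₀ k ρ) ((n : ℝ) + 1) ∧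
    IsBigORho (fun ρ => t3 n ω ε₀ μ₀ k ρ) (2 * (n : ℝ) + 1) ∧
    IsBigORho (fun ρ => t4 n ω ε₀ μ₀ k ρ) ((n : ℝ) + 1) ∧
    ∃ δ : ℝ, 0 < δ ∧ ∀ ρ : ℝ, 0 < ρ → ρ < δ →
      (invSqrtC μ₀ * (ρ : ℂ) * sbh n ((ω * ρ : ℝ) : ℂ) * sbJ n ((k * ω : ℝ) : ℂ)
          - invSqrtC ε₀ * (k : ℂ) * sbH n ((ω * ρ : ℝ) : ℂ) * sbj n ((k * ω : ℝ) : ℂ) ≠ 0) ∧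
      (invSqrtC μ₀ * (ρ : ℂ) * sbJ n ((k * ω : ℝ) : ℂ) * sbh n ((ω * ρ : ℝ) : ℂ)
          - invSqrtC ε₀ * (k : ℂ) * sbj n ((k * ω : ℝ) : ℂ) * sbH n ((ω * ρ : ℝ) : ℂ) ≠ 0) ∧
      (invSqrtC ε₀ * (ρ : ℂ) * sbh n ((ω * ρ : ℝ) : ℂ) * sbJ n ((k * ω : ℝ) : ℂ)
          - invSqrtC μ₀ * (k : ℂ) * sbH n ((ω * ρ : ℝ) : ℂ) * sbj n ((k * ω : ℝ) : ℂ) ≠ 0) ∧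
      (invSqrtC ε₀ * (ρ : ℂ) * sbJ n ((k * ω : ℝ) : ℂ) * sbh n ((ω * ρ : ℝ) : ℂ)
          - invSqrtC μ₀ * (k : ℂ) * sbj n ((k * ω : ℝ) : ℂ) * sbH n ((ω * ρ : ℝ) : ℂ) ≠ 0) := by
  have hk0 : k ≠ 0 := by rw [hk]; exact (Real.sqrt_pos.2 (mul_pos hε hμ)).ne'
  have hn0 : n ≠ 0 := by omega
  obtain ⟨δ, hδ, hδden⟩ := (nhdsGT_basis (0 : ℝ)).eventually_iff.1
    ((eventually_dens_ne_zero (μ₀ := μ₀) hω.ne' hε hk0 hn0 hjk).and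
      (eventually_dens_ne_zero (μ₀ := ε₀) hω.ne' hμ hk0 hn0 hjk))
  rw [show 2 * (n : ℝ) + 1 = (2 * n + 1 : ℕ) by push_cast; ring,
    show (n : ℝ) + 1 = (n + 1 : ℕ) by push_cast; ring, t3_eq_t1, funext (t4_eq_inv_mul_t2 hk0)]
  refine ⟨.of_isBigO (isBigO_t1 hω.ne' hε hk0 hn0 hjk),
    .of_isBigO (isBigO_t2 hω.ne' hε hk0 hn0 hjk), .of_isBigO (isBigO_t1 hω.ne' hμ hk0 hn0 hjk),
    .of_isBigO ((isBigO_t2 hω.ne' hμ hk0 hn0 hjk).const_mul_left _), δ, hδ, fun ρ hρ hρδ => ?_⟩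
  obtain ⟨⟨h₁, h₂⟩, h₃, h₄⟩ := hδden ⟨hρ, hρδ⟩
  exact ⟨h₁, h₂, h₃, h₄⟩
end

section
/- Fix ω > 0, ε₀ > 0, μ₀ > 0, an integer n ≥ 1, and set k = (ε₀μ₀)^{1/2}; assume j_n(2ω) ≠ 0 and j_n(kω) ≠ 0, and let f ∈ ℂ. Then there exists δ > 0 such that for every ρ ∈ (0, δ) the 3×3 linear system in the unknowns (c, α, γ) ∈ ℂ³: h_n(2ω)c + j_n(2ω)γ = f; ρ h_n(ωρ)c + ρ j_n(ωρ)γ = ε₀^{−1/2} j_n(kω) α; k 𝓗_n(ωρ)c + k 𝒥_n(ωρ)γ = μ₀^{−1/2} 𝒥_n(kω) α, has a unique solution, and this solution is given explicitly by γ = f / (t₁(ρ) h_n(2ω) + j_n(2ω)), c = t₁(ρ) γ, α = t₂(ρ) γ. -/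
open Filter Topology

section LinearSystem

variable {𝕜 : Type*} [Field 𝕜]

theorem linear_system_iff {p q r s u r' s' u' f t τ : 𝕜} (v : 𝕜 × 𝕜 × 𝕜) (hu : u ≠ 0)
    (hD : u' * r - u * r' ≠ 0) (ht : t = (u * s' - u' * s) / (u' * r - u * r'))
    (hτ : τ = (r * s' - r' * s) / (u' * r - u * r')) (hG : t * p + q ≠ 0) :
    (p * v.1 + q * v.2.2 = f ∧ r * v.1 + s * v.2.2 = u * v.2.1 ∧
        r' * v.1 + s' * v.2.2 = u' * v.2.1) ↔
      v = (t * (f / (t * p + q)), τ * (f / (t * p + q)), f / (t * p + q)) := by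
  have htD : (u' * r - u * r') * t = u * s' - u' * s := by rw [ht, mul_div_cancel₀ _ hD]
  have hτD : (u' * r - u * r') * τ = r * s' - r' * s := by rw [hτ, mul_div_cancel₀ _ hD]
  obtain ⟨c, α, γ⟩ := v
  simp only [Prod.mk.injEq]
  constructor
  · rintro ⟨h₁, h₂, h₃⟩
    have hc : c = t * γ := mul_left_cancel₀ hD (by linear_combination u' * h₂ - u * h₃ - γ * htD)
    have hγ : γ = f / (t * p + q) := by
      rw [eq_div_iff hG]; linear_combination h₁ - p * hc
    have hα : α = τ * γ :=
      mul_left_cancel₀ (mul_ne_zero hu hD)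
        (by linear_combination -(u' * r - u * r') * h₂ + r * (u' * r - u * r') * hc
          + r * γ * htD - u * γ * hτD)
    exact ⟨hc.trans (by rw [hγ]), hα.trans (by rw [hγ]), hγ⟩
  · rintro ⟨rfl, rfl, rfl⟩
    refine ⟨by linear_combination mul_div_cancel₀ f hG, mul_left_cancel₀ hD ?_,
      mul_left_cancel₀ hD ?_⟩
    · linear_combination (f / (t * p + q)) * (r * htD - u * hτD)
    · linear_combination (f / (t * p + q)) * (r' * htD - u' * hτD)

theorem linear_system_existsUnique {p q r s u r' s' u' f t τ : 𝕜} (hu : u ≠ 0)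
    (hD : u' * r - u * r' ≠ 0) (ht : t = (u * s' - u' * s) / (u' * r - u * r'))
    (hτ : τ = (r * s' - r' * s) / (u' * r - u * r')) (hG : t * p + q ≠ 0) :
    (∃! v : 𝕜 × 𝕜 × 𝕜, p * v.1 + q * v.2.2 = f ∧ r * v.1 + s * v.2.2 = u * v.2.1 ∧
        r' * v.1 + s' * v.2.2 = u' * v.2.1) ∧
      ∀ v : 𝕜 × 𝕜 × 𝕜, (p * v.1 + q * v.2.2 = f ∧ r * v.1 + s * v.2.2 = u * v.2.1 ∧
        r' * v.1 + s' * v.2.2 = u' * v.2.1) →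
        v = (t * (f / (t * p + q)), τ * (f / (t * p + q)), f / (t * p + q)) :=
  have hsys := fun v => linear_system_iff v hu hD ht hτ hG
  ⟨⟨_, (hsys _).2 rfl, fun v hv => (hsys v).1 hv⟩, fun v hv => (hsys v).1 hv⟩

end LinearSystem

section Rayleigh

open scoped ContDiff

noncomputable def rayleighIter (f : ℂ → ℂ) : ℕ → ℂ → ℂ
  | 0 => f
  | m + 1 => fun z => z * deriv (rayleighIter f m) z - ((2 * m + 1 : ℕ) : ℂ) * rayleighIter f m z

theorem contDiff_rayleighIter {f : ℂ → ℂ} (hf : ContDiff ℂ ∞ f) (m : ℕ) :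
    ContDiff ℂ ∞ (rayleighIter f m) := by
  induction m with
  | zero => exact hf
  | succ m ih =>
    exact (contDiff_id.mul (contDiff_infty_iff_deriv.mp ih).2).sub (contDiff_const.mul ih)

theorem rayleighIter_sin_zero (m : ℕ) : rayleighIter Complex.sin m 0 = 0 := by
  induction m with
  | zero => simp [rayleighIter]
  | succ m ih => simp [rayleighIter, ih]

theorem rayleighIter_cos_zero_ne_zero (m : ℕ) : rayleighIter Complex.cos m 0 ≠ 0 := by
  induction m with
  | zero => simp [rayleighIter]
  | succ m ih =>
    simp only [rayleighIter, zero_mul, zero_sub, neg_ne_zero]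
    exact mul_ne_zero (Nat.cast_ne_zero.mpr (2 * m).succ_ne_zero) ih

theorem sphDOp_iterate_div_eq {f : ℂ → ℂ} (hf : ContDiff ℂ ∞ f) (m : ℕ) {z : ℂ} (hz : z ≠ 0) :
    sphDOp^[m] (fun w => f w / w) z = rayleighIter f m z / z ^ (2 * m + 1) := by
  induction m generalizing z with
  | zero => simp [rayleighIter]
  | succ m ih =>
    have hB := ((contDiff_rayleighIter hf m).differentiable (by simp) z).hasDerivAt
    have hderiv := (hB.div (hasDerivAt_pow (2 * m + 1) z) (pow_ne_zero _ hz)).congr_of_eventuallyEq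
      (eventually_ne_nhds hz |>.mono fun w hw => ih hw)
    rw [Function.iterate_succ_apply']
    change deriv _ z / z = _
    rw [hderiv.deriv, rayleighIter]
    push_cast
    field_simp
    ring

theorem sbj_eq_div_pow (n : ℕ) {z : ℂ} (hz : z ≠ 0) :
    sbj n z = (-1) ^ n * rayleighIter Complex.sin n z / z ^ (n + 1) := by
  rw [sbj, sphDOp_iterate_div_eq Complex.contDiff_sin n hz, neg_pow]
  field_simp
  ring

theorem sbh_eq_div_pow (n : ℕ) {z : ℂ} (hz : z ≠ 0) :
    sbh n z = (-1) ^ n * (rayleighIter Complex.sin n z - Complex.I * rayleighIter Complex.cos n z)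
      / z ^ (n + 1) := by
  rw [sbh, sby, sbj, sphDOp_iterate_div_eq Complex.contDiff_sin n hz,
    sphDOp_iterate_div_eq Complex.contDiff_cos n hz, neg_pow]
  field_simp
  ring

theorem sbj_zero {n : ℕ} (hn : n ≠ 0) : sbj n 0 = 0 := by
  simp [sbj, hn]

end Rayleigh

theorem add_mul_deriv_eq_of_eq_div_pow {F g : ℂ → ℂ} {n : ℕ} {z : ℂ} (hz : z ≠ 0)
    (hg : DifferentiableAt ℂ g z) (hF : ∀ w ≠ 0, F w = g w / w ^ (n + 1)) :
    F z + z * deriv F z = (z * deriv g z - n * g z) / z ^ (n + 1) := by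
  have hderiv := (hg.hasDerivAt.div (hasDerivAt_pow (n + 1) z) (pow_ne_zero _ hz))
    |>.congr_of_eventuallyEq (eventually_ne_nhds hz |>.mono hF)
  rw [hF z hz, hderiv.deriv]
  push_cast
  field_simp
  ring

theorem tendsto_pow_mul_of_eq_div_pow {F g : ℂ → ℂ} {n : ℕ} (hg : Continuous g)
    (hF : ∀ w ≠ 0, F w = g w / w ^ (n + 1)) :
    Tendsto (fun z => z ^ (n + 1) * F z) (𝓝[≠] 0) (𝓝 (g 0)) :=
  (hg.tendsto 0).mono_left nhdsWithin_le_nhds |>.congr' <|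
    eventually_nhdsWithin_of_forall fun w hw => by
      dsimp only
      rw [hF w hw, mul_div_cancel₀ _ (pow_ne_zero _ hw)]

theorem tendsto_pow_mul_add_mul_deriv_of_eq_div_pow {F g : ℂ → ℂ} {n : ℕ}
    (hg : ContDiff ℂ 1 g)
    (hF : ∀ w ≠ 0, F w = g w / w ^ (n + 1)) :
    Tendsto (fun z => z ^ (n + 1) * (F z + z * deriv F z)) (𝓝[≠] 0) (𝓝 (-(n * g 0))) := by
  have hcont : Continuous fun z => z * deriv g z - n * g z :=
    (continuous_id.mul (hg.continuous_deriv le_rfl)).sub (continuous_const.mul hg.continuous)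
  have hlim : Tendsto (fun z => z * deriv g z - n * g z) (𝓝 0) (𝓝 (-(n * g 0))) := by
    simpa using hcont.tendsto 0
  refine (hlim.mono_left nhdsWithin_le_nhds).congr' <|
    eventually_nhdsWithin_of_forall fun w hw => ?_
  dsimp only
  rw [add_mul_deriv_eq_of_eq_div_pow hw (hg.differentiable one_ne_zero w) hF,
    mul_div_cancel₀ _ (pow_ne_zero _ hw)]

open scoped ContDiff in
theorem tendsto_pow_mul_sbj_and_sbJ (n : ℕ) :
    Tendsto (fun z => z ^ (n + 1) * sbj n z) (𝓝[≠] 0) (𝓝 0) ∧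
      Tendsto (fun z => z ^ (n + 1) * sbJ n z) (𝓝[≠] 0) (𝓝 0) := by
  have hg : ContDiff ℂ ∞ fun z => (-1) ^ n * rayleighIter Complex.sin n z :=
    contDiff_const.mul (contDiff_rayleighIter Complex.contDiff_sin n)
  have hF : ∀ w ≠ 0, sbj n w = (-1) ^ n * rayleighIter Complex.sin n w / w ^ (n + 1) :=
    fun w hw => sbj_eq_div_pow n hw
  constructor
  · simpa [rayleighIter_sin_zero] using tendsto_pow_mul_of_eq_div_pow hg.continuous hF
  · simpa [sbJ, rayleighIter_sin_zero] using
      tendsto_pow_mul_add_mul_deriv_of_eq_div_pow (hg.of_le (by simp)) hF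

open scoped ContDiff in
theorem exists_tendsto_pow_mul_sbh_and_sbH (n : ℕ) : ∃ A ≠ 0,
    Tendsto (fun z => z ^ (n + 1) * sbh n z) (𝓝[≠] 0) (𝓝 A) ∧
      Tendsto (fun z => z ^ (n + 1) * sbH n z) (𝓝[≠] 0) (𝓝 (-(n * A))) := by
  set g : ℂ → ℂ := fun z =>
    (-1) ^ n * (rayleighIter Complex.sin n z - Complex.I * rayleighIter Complex.cos n z)
  have hg : ContDiff ℂ ∞ g := contDiff_const.mul <|
    (contDiff_rayleighIter Complex.contDiff_sin n).sub
      (contDiff_const.mul (contDiff_rayleighIter Complex.contDiff_cos n))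
  have hF : ∀ w ≠ 0, sbh n w = g w / w ^ (n + 1) := fun w hw => sbh_eq_div_pow n hw
  refine ⟨g 0, ?_, tendsto_pow_mul_of_eq_div_pow hg.continuous hF,
    tendsto_pow_mul_add_mul_deriv_of_eq_div_pow (hg.of_le (by simp)) hF⟩
  simpa [g, rayleighIter_sin_zero] using rayleighIter_cos_zero_ne_zero n

theorem eventually_ne_zero_and_tendsto_zero_transmission_ratio {n : ℕ} (hn : n ≠ 0) {ω : ℝ}
    (hω : ω ≠ 0) {a : ℂ} (ha : a ≠ 0) (b : ℂ) :
    (∀ᶠ ρ in 𝓝[>] (0 : ℝ), b * ρ * sbh n ((ω * ρ : ℝ) : ℂ) - a * sbH n ((ω * ρ : ℝ) : ℂ) ≠ 0) ∧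
      Tendsto (fun ρ : ℝ => (a * sbJ n ((ω * ρ : ℝ) : ℂ) - b * ρ * sbj n ((ω * ρ : ℝ) : ℂ)) /
        (b * ρ * sbh n ((ω * ρ : ℝ) : ℂ) - a * sbH n ((ω * ρ : ℝ) : ℂ))) (𝓝[>] 0) (𝓝 0) := by
  set z : ℝ → ℂ := fun ρ => ((ω * ρ : ℝ) : ℂ)
  have hρ : Tendsto (fun ρ : ℝ => (ρ : ℂ)) (𝓝[>] 0) (𝓝 0) :=
    (Complex.continuous_ofReal.tendsto' 0 0 (by simp)).mono_left nhdsWithin_le_nhds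
  have hz_ne : ∀ᶠ ρ in 𝓝[>] (0 : ℝ), z ρ ≠ 0 :=
    eventually_nhdsWithin_of_forall fun ρ (hρ : 0 < ρ) => by simp [z, hω, hρ.ne']
  have hz : Tendsto z (𝓝[>] 0) (𝓝[≠] 0) := by
    refine tendsto_nhdsWithin_iff.2 ⟨?_, hz_ne⟩
    simpa [z] using hρ.const_mul (ω : ℂ)
  obtain ⟨hj, hJ⟩ := tendsto_pow_mul_sbj_and_sbJ n
  obtain ⟨A, hA, hh, hH⟩ := exists_tendsto_pow_mul_sbh_and_sbH n
  have hnum : Tendsto (fun ρ : ℝ => z ρ ^ (n + 1) * (a * sbJ n (z ρ) - b * ρ * sbj n (z ρ)))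
      (𝓝[>] 0) (𝓝 0) := by
    simpa using ((hJ.comp hz).const_mul a |>.sub ((hρ.const_mul b).mul (hj.comp hz))).congr
      fun ρ => by simp only [Function.comp]; ring
  have hden : Tendsto (fun ρ : ℝ => z ρ ^ (n + 1) * (b * ρ * sbh n (z ρ) - a * sbH n (z ρ)))
      (𝓝[>] 0) (𝓝 (a * (n * A))) := by
    simpa using ((hρ.const_mul b).mul (hh.comp hz) |>.sub ((hH.comp hz).const_mul a)).congr
      fun ρ => by simp only [Function.comp]; ring
  have hlim_ne : a * (n * A) ≠ 0 := mul_ne_zero ha (mul_ne_zero (Nat.cast_ne_zero.2 hn) hA)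
  refine ⟨(hden.eventually_ne hlim_ne).mono fun ρ h => right_ne_zero_of_mul h, ?_⟩
  rw [← zero_div (a * (n * A))]
  exact (hnum.div hden hlim_ne).congr' <| hz_ne.mono fun ρ hρ =>
    mul_div_mul_left _ _ (pow_ne_zero _ hρ)

theorem transmission_system_unique_solution_general
    (ω ε₀ μ₀ : ℝ) (hε : 0 < ε₀)
    (n : ℕ) (hn : 1 ≤ n) (k : ℝ)
    (hj2 : sbj n ((2 * ω : ℝ) : ℂ) ≠ 0) (hjk : sbj n ((k * ω : ℝ) : ℂ) ≠ 0)
    (f : ℂ) :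
    ∃ δ : ℝ, 0 < δ ∧ ∀ ρ : ℝ, 0 < ρ → ρ < δ →
      (∃! v : ℂ × ℂ × ℂ,
        sbh n ((2 * ω : ℝ) : ℂ) * v.1 + sbj n ((2 * ω : ℝ) : ℂ) * v.2.2 = f ∧
        (ρ : ℂ) * sbh n ((ω * ρ : ℝ) : ℂ) * v.1 + (ρ : ℂ) * sbj n ((ω * ρ : ℝ) : ℂ) * v.2.2
          = invSqrtC ε₀ * sbj n ((k * ω : ℝ) : ℂ) * v.2.1 ∧
        (k : ℂ) * sbH n ((ω * ρ : ℝ) : ℂ) * v.1 + (k : ℂ) * sbJ n ((ω * ρ : ℝ) : ℂ) * v.2.2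
          = invSqrtC μ₀ * sbJ n ((k * ω : ℝ) : ℂ) * v.2.1) ∧
      (∀ v : ℂ × ℂ × ℂ,
        (sbh n ((2 * ω : ℝ) : ℂ) * v.1 + sbj n ((2 * ω : ℝ) : ℂ) * v.2.2 = f ∧
         (ρ : ℂ) * sbh n ((ω * ρ : ℝ) : ℂ) * v.1 + (ρ : ℂ) * sbj n ((ω * ρ : ℝ) : ℂ) * v.2.2
           = invSqrtC ε₀ * sbj n ((k * ω : ℝ) : ℂ) * v.2.1 ∧
         (k : ℂ) * sbH n ((ω * ρ : ℝ) : ℂ) * v.1 + (k : ℂ) * sbJ n ((ω * ρ : ℝ) : ℂ) * v.2.2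
           = invSqrtC μ₀ * sbJ n ((k * ω : ℝ) : ℂ) * v.2.1) →
        v = (t1 n ω ε₀ μ₀ k ρ * (f / (t1 n ω ε₀ μ₀ k ρ * sbh n ((2 * ω : ℝ) : ℂ)
               + sbj n ((2 * ω : ℝ) : ℂ))),
             t2 n ω ε₀ μ₀ k ρ * (f / (t1 n ω ε₀ μ₀ k ρ * sbh n ((2 * ω : ℝ) : ℂ)
               + sbj n ((2 * ω : ℝ) : ℂ))),
             f / (t1 n ω ε₀ μ₀ k ρ * sbh n ((2 * ω : ℝ) : ℂ) + sbj n ((2 * ω : ℝ) : ℂ)))) := by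
  have hn0 : n ≠ 0 := Nat.one_le_iff_ne_zero.mp hn
  have hω : ω ≠ 0 := by
    rintro rfl
    simp [sbj_zero hn0] at hj2
  have hk : (k : ℂ) ≠ 0 := by
    rintro hk
    simp [Complex.ofReal_eq_zero.mp hk, sbj_zero hn0] at hjk
  have he : invSqrtC ε₀ ≠ 0 := by simp [invSqrtC, (Real.sqrt_pos.mpr hε).ne']
  obtain ⟨hden, hratio⟩ := eventually_ne_zero_and_tendsto_zero_transmission_ratio hn0 hω
    (mul_ne_zero (mul_ne_zero he hk) hjk) (invSqrtC μ₀ * sbJ n ((k * ω : ℝ) : ℂ))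
  have ht1 : Tendsto (t1 n ω ε₀ μ₀ k) (𝓝[>] 0) (𝓝 0) :=
    hratio.congr fun ρ => by unfold t1; ring
  have hG : ∀ᶠ ρ in 𝓝[>] 0,
      t1 n ω ε₀ μ₀ k ρ * sbh n ((2 * ω : ℝ) : ℂ) + sbj n ((2 * ω : ℝ) : ℂ) ≠ 0 :=
    ((ht1.mul_const _).add_const _).eventually_ne (by simpa using hj2)
  obtain ⟨δ, hδ, hsmall⟩ := (nhdsGT_basis (0 : ℝ)).eventually_iff.mp (hden.and hG)
  refine ⟨δ, hδ, fun ρ hρ hρδ => ?_⟩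
  obtain ⟨hD, hG⟩ := hsmall ⟨hρ, hρδ⟩
  exact linear_system_existsUnique (mul_ne_zero he hjk) (fun h => hD (by linear_combination h))
    (by unfold t1; ring) (by unfold t2; ring) hG

/-- For all sufficiently small `ρ > 0`, the mode-`n` boundary and
transmission system of the regularized lossless cloaking problem has a unique solution
`(c, α, γ)`, given explicitly by `γ = f/(t₁(ρ)h_n(2ω) + j_n(2ω))`, `c = t₁(ρ)γ`,
`α = t₂(ρ)γ`. -/
theorem transmission_system_unique_solution
    (ω ε₀ μ₀ : ℝ) (hω : 0 < ω) (hε : 0 < ε₀) (hμ : 0 < μ₀)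
    (n : ℕ) (hn : 1 ≤ n) (k : ℝ) (hk : k = Real.sqrt (ε₀ * μ₀))
    (hj2 : sbj n ((2 * ω : ℝ) : ℂ) ≠ 0) (hjk : sbj n ((k * ω : ℝ) : ℂ) ≠ 0)
    (f : ℂ) :
    ∃ δ : ℝ, 0 < δ ∧ ∀ ρ : ℝ, 0 < ρ → ρ < δ →
      (∃! v : ℂ × ℂ × ℂ,
        sbh n ((2 * ω : ℝ) : ℂ) * v.1 + sbj n ((2 * ω : ℝ) : ℂ) * v.2.2 = f ∧
        (ρ : ℂ) * sbh n ((ω * ρ : ℝ) : ℂ) * v.1 + (ρ : ℂ) * sbj n ((ω * ρ : ℝ) : ℂ) * v.2.2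
          = invSqrtC ε₀ * sbj n ((k * ω : ℝ) : ℂ) * v.2.1 ∧
        (k : ℂ) * sbH n ((ω * ρ : ℝ) : ℂ) * v.1 + (k : ℂ) * sbJ n ((ω * ρ : ℝ) : ℂ) * v.2.2
          = invSqrtC μ₀ * sbJ n ((k * ω : ℝ) : ℂ) * v.2.1) ∧
      (∀ v : ℂ × ℂ × ℂ,
        (sbh n ((2 * ω : ℝ) : ℂ) * v.1 + sbj n ((2 * ω : ℝ) : ℂ) * v.2.2 = f ∧
         (ρ : ℂ) * sbh n ((ω * ρ : ℝ) : ℂ) * v.1 + (ρ : ℂ) * sbj n ((ω * ρ : ℝ) : ℂ) * v.2.2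
           = invSqrtC ε₀ * sbj n ((k * ω : ℝ) : ℂ) * v.2.1 ∧
         (k : ℂ) * sbH n ((ω * ρ : ℝ) : ℂ) * v.1 + (k : ℂ) * sbJ n ((ω * ρ : ℝ) : ℂ) * v.2.2
           = invSqrtC μ₀ * sbJ n ((k * ω : ℝ) : ℂ) * v.2.1) →
        v = (t1 n ω ε₀ μ₀ k ρ * (f / (t1 n ω ε₀ μ₀ k ρ * sbh n ((2 * ω : ℝ) : ℂ)
               + sbj n ((2 * ω : ℝ) : ℂ))),
             t2 n ω ε₀ μ₀ k ρ * (f / (t1 n ω ε₀ μ₀ k ρ * sbh n ((2 * ω : ℝ) : ℂ)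
               + sbj n ((2 * ω : ℝ) : ℂ))),
             f / (t1 n ω ε₀ μ₀ k ρ * sbh n ((2 * ω : ℝ) : ℂ) + sbj n ((2 * ω : ℝ) : ℂ)))) :=
  transmission_system_unique_solution_general ω ε₀ μ₀ hε n hn k hj2 hjk f
end

section
/- Fix ω > 0, ε₀ > 0, μ₀ > 0, an integer n ≥ 1, and set k = (ε₀μ₀)^{1/2}; assume j_n(2ω) ≠ 0 and j_n(kω) ≠ 0. Let f, p ∈ ℂ be fixed (boundary datum and interior source coefficient for the n-th mode). For small ρ > 0 define a = f/j_n(2ω), γ(ρ) = (f − p t₁′(ρ) h_n(2ω)) / (t₁(ρ) h_n(2ω) + j_n(2ω)), and c(ρ) = t₁(ρ)γ(ρ) + t₁′(ρ)p. Then as ρ → 0⁺, a − γ(ρ) = O(ρ^{n+1}) and c(ρ) = O(ρ^{n+1}). Hence, with a point source present in the cloaked region, the n-th mode of the boundary-data perturbation is O(ρ^{n+1}) — one order worse in ρ than the source-free rate O(ρ^{2n+1}), but still vanishing as ρ → 0⁺. -/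
/-- The source transmission ratio `t₁′(ρ)`. -/
noncomputable def t1' (n : ℕ) (ω ε₀ μ₀ k ρ : ℝ) : ℂ :=
  (sbh n ((k * ω : ℝ) : ℂ) * sbJ n ((k * ω : ℝ) : ℂ)
      - sbH n ((k * ω : ℝ) : ℂ) * sbj n ((k * ω : ℝ) : ℂ)) /
  (invSqrtC μ₀ * (ρ : ℂ) * sbh n ((ω * ρ : ℝ) : ℂ) * sbJ n ((k * ω : ℝ) : ℂ)
      - invSqrtC ε₀ * (k : ℂ) * sbH n ((ω * ρ : ℝ) : ℂ) * sbj n ((k * ω : ℝ) : ℂ))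

/-- The source transmission ratio `t₂′(ρ)`. -/
noncomputable def t2' (n : ℕ) (ω ε₀ μ₀ k ρ : ℝ) : ℂ :=
  (invSqrtC ε₀ * (k : ℂ) * sbh n ((k * ω : ℝ) : ℂ) * sbH n ((ω * ρ : ℝ) : ℂ)
      - invSqrtC μ₀ * (ρ : ℂ) * sbH n ((k * ω : ℝ) : ℂ) * sbh n ((ω * ρ : ℝ) : ℂ)) /
  (invSqrtC μ₀ * (ρ : ℂ) * sbh n ((ω * ρ : ℝ) : ℂ) * sbJ n ((k * ω : ℝ) : ℂ)
      - invSqrtC ε₀ * (k : ℂ) * sbH n ((ω * ρ : ℝ) : ℂ) * sbj n ((k * ω : ℝ) : ℂ))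

/-- The source transmission ratio `t₃′(ρ)`. -/
noncomputable def t3' (n : ℕ) (ω ε₀ μ₀ k ρ : ℝ) : ℂ :=
  (sbJ n ((k * ω : ℝ) : ℂ) * sbh n ((k * ω : ℝ) : ℂ)
      - sbH n ((k * ω : ℝ) : ℂ) * sbj n ((k * ω : ℝ) : ℂ)) /
  (invSqrtC ε₀ * (ρ : ℂ) * sbh n ((ω * ρ : ℝ) : ℂ) * sbJ n ((k * ω : ℝ) : ℂ)
      - invSqrtC μ₀ * (k : ℂ) * sbH n ((ω * ρ : ℝ) : ℂ) * sbj n ((k * ω : ℝ) : ℂ))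

/-- The source transmission ratio `t₄′(ρ)`. -/
noncomputable def t4' (n : ℕ) (ω ε₀ μ₀ k ρ : ℝ) : ℂ :=
  (invSqrtC μ₀ * (k : ℂ) * sbh n ((k * ω : ℝ) : ℂ) * sbH n ((ω * ρ : ℝ) : ℂ)
      - invSqrtC ε₀ * (ρ : ℂ) * sbH n ((k * ω : ℝ) : ℂ) * sbh n ((ω * ρ : ℝ) : ℂ)) /
  (invSqrtC ε₀ * (ρ : ℂ) * sbh n ((ω * ρ : ℝ) : ℂ) * sbJ n ((k * ω : ℝ) : ℂ)
      - invSqrtC μ₀ * (k : ℂ) * sbj n ((k * ω : ℝ) : ℂ) * sbH n ((ω * ρ : ℝ) : ℂ))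


/-!
The Rayleigh formulas give `j_n(z) = z^n A(z)` and `h_n(z) = z^(-(n+1)) H(z)` with `A`, `H`
entire and `H 0 ≠ 0`: iterating `z⁻¹ d/dz` keeps `sin z / z` an entire even function, and raises
the pole order of `cos z / z` by two at each step. Then `𝒥_n` and `𝓗_n` have the same shape, the
latter with leading coefficient `-n H 0 ≠ 0` since `n ≥ 1`. So the common denominator of `t₁`
and `t₁′` is `ρ^(-(n+1))` times a function with a nonzero limit at `0`, which gives
`t₁ = O(ρ^(2n+1))` and `t₁′ = O(ρ^(n+1))`. Finally `a - γ` and `c` are combinations of `t₁` and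
`t₁′` divided by `t₁ h_n(2ω) + j_n(2ω) → j_n(2ω) ≠ 0`.
-/

open Complex Filter Topology Asymptotics

section ZpowMul

variable {F U : ℂ → ℂ} {m : ℤ} {z : ℂ}

theorem deriv_of_eq_zpow_mul (hU : DifferentiableAt ℂ U z) (hz : z ≠ 0)
    (hF : ∀ w, w ≠ 0 → F w = w ^ m * U w) :
    deriv F z = z ^ (m - 1) * (m * U z + z * deriv U z) := by
  have hFU : F =ᶠ[𝓝 z] fun w => w ^ m * U w :=
    (eventually_ne_nhds hz).mono hF
  rw [hFU.deriv_eq, ((hasDerivAt_zpow m z (Or.inl hz)).fun_mul hU.hasDerivAt).deriv,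
    show z ^ m = z ^ (m - 1) * z by rw [← zpow_add_one₀ hz, sub_add_cancel]]
  ring

theorem sphDOp_of_eq_zpow_mul (hU : DifferentiableAt ℂ U z) (hz : z ≠ 0)
    (hF : ∀ w, w ≠ 0 → F w = w ^ m * U w) :
    sphDOp F z = z ^ (m - 2) * (m * U z + z * deriv U z) := by
  rw [sphDOp, deriv_of_eq_zpow_mul hU hz hF,
    show z ^ (m - 1) = z ^ (m - 2) * z by rw [← zpow_add_one₀ hz]; ring_nf]
  field_simp

theorem add_mul_deriv_of_eq_zpow_mul (hU : DifferentiableAt ℂ U z) (hz : z ≠ 0)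
    (hF : ∀ w, w ≠ 0 → F w = w ^ m * U w) :
    F z + z * deriv F z = z ^ m * ((m + 1) * U z + z * deriv U z) := by
  rw [hF z hz, deriv_of_eq_zpow_mul hU hz hF,
    show z ^ m = z ^ (m - 1) * z by rw [← zpow_add_one₀ hz, sub_add_cancel]]
  ring

end ZpowMul

theorem exists_sphDOp_eq_of_even {F V : ℂ → ℂ} (hV : Differentiable ℂ V) (hVe : V.Even)
    (hF : ∀ z, z ≠ 0 → F z = V z) :
    ∃ W : ℂ → ℂ, Differentiable ℂ W ∧ W.Even ∧ ∀ z, z ≠ 0 → sphDOp F z = W z := by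
  have hodd : (deriv V).Odd := fun z => by
    simpa only [funext hVe, neg_neg] using deriv_comp_neg (f := V) (x := -z)
  have h0 : deriv V 0 = 0 := hodd.map_zero
  refine ⟨dslope (deriv V) 0, ?_, fun z => ?_, fun z hz => ?_⟩
  · exact differentiableOn_univ.mp
      ((Complex.differentiableOn_dslope univ_mem).mpr hV.deriv.differentiableOn)
  · rcases eq_or_ne z 0 with rfl | hz
    · rw [neg_zero]
    · rw [dslope_of_ne _ (neg_ne_zero.mpr hz), dslope_of_ne _ hz, slope_def_field,
        slope_def_field, hodd, h0]
      ring
  · have hFV : F =ᶠ[𝓝 z] V := (eventually_ne_nhds hz).mono hF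
    rw [sphDOp, hFV.deriv_eq, dslope_of_ne _ hz, slope_def_field, h0, sub_zero, sub_zero]

-- Lets the iteration on `sin w / w` start from `-cos`, which is entire and even.
theorem sin_div_eq_sphDOp_neg_cos :
    (fun w => Complex.sin w / w) = sphDOp (fun w => -Complex.cos w) := by
  funext w
  simp [sphDOp]

theorem exists_iterate_sphDOp_sin_div (m : ℕ) :
    ∃ V : ℂ → ℂ, Differentiable ℂ V ∧
      ∀ z, z ≠ 0 → sphDOp^[m] (fun w => Complex.sin w / w) z = V z := by
  suffices ∃ V : ℂ → ℂ, Differentiable ℂ V ∧ V.Even ∧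
      ∀ z, z ≠ 0 → sphDOp^[m + 1] (fun w => -Complex.cos w) z = V z by
    obtain ⟨V, hV, -, hF⟩ := this
    exact ⟨V, hV, by rwa [sin_div_eq_sphDOp_neg_cos, ← Function.iterate_succ_apply]⟩
  induction m with
  | zero =>
    exact exists_sphDOp_eq_of_even (F := fun w => -Complex.cos w) (by fun_prop)
      (fun z => by simp) (fun _ _ => rfl)
  | succ m ih =>
    obtain ⟨V, hV, hVe, hF⟩ := ih
    rw [Function.iterate_succ_apply']
    exact exists_sphDOp_eq_of_even hV hVe hF

theorem exists_iterate_sphDOp_cos_div (m : ℕ) :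
    ∃ U : ℂ → ℂ, Differentiable ℂ U ∧ U 0 ≠ 0 ∧
      ∀ z, z ≠ 0 → sphDOp^[m] (fun w => Complex.cos w / w) z = z ^ (-(2 * m + 1 : ℤ)) * U z := by
  induction m with
  | zero =>
    refine ⟨Complex.cos, Complex.differentiable_cos, by simp, fun z _ => ?_⟩
    simp [div_eq_inv_mul]
  | succ m ih =>
    obtain ⟨U, hU, hU0, hF⟩ := ih
    refine ⟨fun z => -(2 * m + 1 : ℤ) * U z + z * deriv U z, by fun_prop, ?_, fun z hz => ?_⟩
    · simp only [zero_mul, add_zero]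
      refine mul_ne_zero ?_ hU0
      exact_mod_cast (by omega : -(2 * (m : ℤ) + 1) ≠ 0)
    · rw [Function.iterate_succ_apply', sphDOp_of_eq_zpow_mul (hU z) hz hF]
      push_cast
      ring_nf

theorem exists_sbj_eq_zpow_mul (n : ℕ) :
    ∃ A : ℂ → ℂ, Differentiable ℂ A ∧ ∀ z, z ≠ 0 → sbj n z = z ^ (n : ℤ) * A z := by
  obtain ⟨V, hV, hVeq⟩ := exists_iterate_sphDOp_sin_div n
  refine ⟨fun z => (-1) ^ n * V z, by fun_prop, fun z hz => ?_⟩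
  rw [sbj, hVeq z hz, zpow_natCast, neg_pow z]
  ring

theorem exists_sbh_eq_zpow_mul (n : ℕ) :
    ∃ H : ℂ → ℂ, Differentiable ℂ H ∧ H 0 ≠ 0 ∧
      ∀ z, z ≠ 0 → sbh n z = z ^ (-(n + 1 : ℤ)) * H z := by
  obtain ⟨V, hV, hVeq⟩ := exists_iterate_sphDOp_sin_div n
  obtain ⟨U, hU, hU0, hUeq⟩ := exists_iterate_sphDOp_cos_div n
  refine ⟨fun z => (-1) ^ n * (z ^ (2 * n + 1) * V z - I * U z), by fun_prop, by simpa using hU0,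
    fun z hz => ?_⟩
  rw [sbh, sbj, sby, hVeq z hz, hUeq z hz, neg_pow z,
    show (-(n + 1 : ℤ)) = -((n + 1 : ℕ) : ℤ) by push_cast; ring,
    show (-(2 * n + 1 : ℤ)) = -((2 * n + 1 : ℕ) : ℤ) by push_cast; ring, zpow_neg, zpow_neg,
    zpow_natCast, zpow_natCast]
  field_simp
  ring

theorem div_eq_pow_mul_div {K : Type*} [Field K] {x y z a b : K} {m n : ℕ}
    (hx : x = z ^ m * a) (hy : y = (z ^ n)⁻¹ * b) : x / y = z ^ (m + n) * (a / b) := by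
  rw [hx, hy, div_eq_mul_inv, mul_inv, inv_inv]
  ring

theorem isBigO_pow_of_eq_pow_mul_div {F N D : ℝ → ℂ} {m : ℕ} (hN : ContinuousAt N 0)
    (hD : ContinuousAt D 0) (hD0 : D 0 ≠ 0) (hF : ∀ ρ, 0 < ρ → F ρ = ρ ^ m * (N ρ / D ρ)) :
    F =O[𝓝[>] 0] fun ρ => ρ ^ m := by
  have hpow : (fun ρ : ℝ => (ρ : ℂ) ^ m) =O[𝓝[>] 0] fun ρ => ρ ^ m :=
    isBigO_of_le _ fun ρ => by simp
  have hbdd : (fun ρ => N ρ / D ρ) =O[𝓝[>] 0] fun _ => (1 : ℝ) :=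
    ((hN.div hD hD0).tendsto.mono_left nhdsWithin_le_nhds).isBigO_one ℝ
  refine (hpow.mul hbdd).congr' ?_ (by simp)
  filter_upwards [self_mem_nhdsWithin] with ρ hρ
  exact (hF ρ hρ).symm

-- With `j_n(z) = z^n A(z)` and `h_n(z) = z^(-(n+1)) H(z)`, these are the numerator of `t₁`
-- divided by `(ωρ)^n` and its denominator (shared with `t₁′`) multiplied by `(ωρ)^(n+1)`.
noncomputable def t1Num (A : ℂ → ℂ) (n : ℕ) (ω ε₀ μ₀ k ρ : ℝ) : ℂ :=
  invSqrtC ε₀ * k * ((n + 1) * A ((ω * ρ : ℝ) : ℂ)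
      + ((ω * ρ : ℝ) : ℂ) * deriv A ((ω * ρ : ℝ) : ℂ)) * sbj n ((k * ω : ℝ) : ℂ)
    - invSqrtC μ₀ * ρ * A ((ω * ρ : ℝ) : ℂ) * sbJ n ((k * ω : ℝ) : ℂ)

noncomputable def t1Den (H : ℂ → ℂ) (n : ℕ) (ω ε₀ μ₀ k ρ : ℝ) : ℂ :=
  invSqrtC μ₀ * ρ * H ((ω * ρ : ℝ) : ℂ) * sbJ n ((k * ω : ℝ) : ℂ)
    - invSqrtC ε₀ * k * (-n * H ((ω * ρ : ℝ) : ℂ)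
      + ((ω * ρ : ℝ) : ℂ) * deriv H ((ω * ρ : ℝ) : ℂ)) * sbj n ((k * ω : ℝ) : ℂ)

section Transmission

variable {A H : ℂ → ℂ} {n : ℕ} {ω ε₀ μ₀ k : ℝ}

theorem t1_eq_and_t1'_eq (hA : Differentiable ℂ A) (hH : Differentiable ℂ H)
    (hAeq : ∀ z, z ≠ 0 → sbj n z = z ^ (n : ℤ) * A z)
    (hHeq : ∀ z, z ≠ 0 → sbh n z = z ^ (-(n + 1 : ℤ)) * H z) (hω : ω ≠ 0) {ρ : ℝ} (hρ : 0 < ρ) :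
    t1 n ω ε₀ μ₀ k ρ =
        ρ ^ (2 * n + 1) * (ω ^ (2 * n + 1) * t1Num A n ω ε₀ μ₀ k ρ / t1Den H n ω ε₀ μ₀ k ρ) ∧
      t1' n ω ε₀ μ₀ k ρ = ρ ^ (n + 1) * (ω ^ (n + 1) * (sbh n ((k * ω : ℝ) : ℂ)
        * sbJ n ((k * ω : ℝ) : ℂ) - sbH n ((k * ω : ℝ) : ℂ) * sbj n ((k * ω : ℝ) : ℂ))
          / t1Den H n ω ε₀ μ₀ k ρ) := by
  have hz : ((ω * ρ : ℝ) : ℂ) ≠ 0 := by exact_mod_cast mul_ne_zero hω hρ.ne'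
  have hJ := add_mul_deriv_of_eq_zpow_mul (hA _) hz hAeq
  have hH := add_mul_deriv_of_eq_zpow_mul (hH _) hz hHeq
  rw [← sbJ] at hJ
  rw [← sbH] at hH
  rw [t1, t1', hJ, hH, hAeq _ hz, hHeq _ hz, zpow_natCast,
    show (-(n + 1 : ℤ)) = -((n + 1 : ℕ) : ℤ) by push_cast; ring, zpow_neg, zpow_natCast]
  constructor
  · rw [div_eq_pow_mul_div (z := ((ω * ρ : ℝ) : ℂ)) (n := n + 1) (a := t1Num A n ω ε₀ μ₀ k ρ)
      (b := t1Den H n ω ε₀ μ₀ k ρ) (by rw [t1Num]; push_cast; ring)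
      (by rw [t1Den]; push_cast; ring)]
    push_cast
    ring
  · rw [div_eq_pow_mul_div (z := ((ω * ρ : ℝ) : ℂ)) (m := 0) (n := n + 1)
      (b := t1Den H n ω ε₀ μ₀ k ρ) (by rw [pow_zero, one_mul]) (by rw [t1Den]; push_cast; ring)]
    push_cast
    ring

theorem t1Den_zero_ne_zero (hn : 1 ≤ n) (hε : 0 < ε₀) (hk : k ≠ 0)
    (hjk : sbj n ((k * ω : ℝ) : ℂ) ≠ 0) (hH0 : H 0 ≠ 0) : t1Den H n ω ε₀ μ₀ k 0 ≠ 0 := by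
  have hinv : invSqrtC ε₀ ≠ 0 := by
    simp only [invSqrtC, ne_eq, ofReal_eq_zero, inv_eq_zero, Real.sqrt_eq_zero', not_le, hε]
  have hn0 : (n : ℂ) ≠ 0 := by exact_mod_cast (by omega : n ≠ 0)
  simp only [t1Den, mul_zero, ofReal_zero, zero_mul, zero_sub, add_zero, neg_ne_zero]
  exact mul_ne_zero (mul_ne_zero (mul_ne_zero hinv (ofReal_ne_zero.mpr hk))
    (mul_ne_zero (neg_ne_zero.mpr hn0) hH0)) hjk

theorem isBigO_t1_and_t1' (hn : 1 ≤ n) (hω : ω ≠ 0) (hε : 0 < ε₀) (hk : k ≠ 0)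
    (hjk : sbj n ((k * ω : ℝ) : ℂ) ≠ 0) :
    t1 n ω ε₀ μ₀ k =O[𝓝[>] 0] (fun ρ => ρ ^ (2 * n + 1)) ∧
      t1' n ω ε₀ μ₀ k =O[𝓝[>] 0] (fun ρ => ρ ^ (n + 1)) := by
  obtain ⟨A, hA, hAeq⟩ := exists_sbj_eq_zpow_mul n
  obtain ⟨H, hH, hH0, hHeq⟩ := exists_sbh_eq_zpow_mul n
  have hNum : Continuous (t1Num A n ω ε₀ μ₀ k) := by
    have := hA.continuous
    have := hA.deriv.continuous
    unfold t1Num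
    fun_prop
  have hDen : Continuous (t1Den H n ω ε₀ μ₀ k) := by
    have := hH.continuous
    have := hH.deriv.continuous
    unfold t1Den
    fun_prop
  have hDen0 := t1Den_zero_ne_zero (μ₀ := μ₀) hn hε hk hjk hH0
  have hrepr := fun ρ (hρ : 0 < ρ) =>
    t1_eq_and_t1'_eq (ε₀ := ε₀) (μ₀ := μ₀) (k := k) hA hH hAeq hHeq hω hρ
  exact ⟨isBigO_pow_of_eq_pow_mul_div (by fun_prop) hDen.continuousAt hDen0
      fun ρ hρ => (hrepr ρ hρ).1,
    isBigO_pow_of_eq_pow_mul_div continuousAt_const hDen.continuousAt hDen0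
      fun ρ hρ => (hrepr ρ hρ).2⟩

end Transmission

section Coefficients

variable {α : Type*} {l : Filter α} {g : α → ℝ} {t t' : α → ℂ}

theorem tendsto_mul_add_of_isBigO (h j : ℂ) (ht : t =O[l] g) (hg : Tendsto g l (𝓝 0)) :
    Tendsto (fun x => t x * h + j) l (𝓝 j) := by
  simpa using ((ht.trans_tendsto hg).mul_const h).add_const j

theorem isBigO_div_sub_div (f p h j : ℂ) (ht : t =O[l] g) (ht' : t' =O[l] g)
    (hg : Tendsto g l (𝓝 0)) (hj : j ≠ 0) :
    (fun x => f / j - (f - p * t' x * h) / (t x * h + j)) =O[l] g := by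
  have hden := tendsto_mul_add_of_isBigO h j ht hg
  have hinv : (fun x => (t x * h + j)⁻¹) =O[l] fun _ => (1 : ℝ) :=
    (hden.inv₀ hj).isBigO_one ℝ
  have hnum : (fun x => f / j * h * t x + p * h * t' x) =O[l] g :=
    (ht.const_mul_left _).add (ht'.const_mul_left _)
  refine (hnum.mul hinv).congr' ?_ (by simp)
  filter_upwards [hden.eventually_ne hj] with x hx
  rw [← div_eq_mul_inv, div_sub_div _ _ hj hx, div_eq_div_iff hx (mul_ne_zero hj hx)]
  field_simp
  ring

theorem isBigO_mul_div_add_mul (f p h j : ℂ) (ht : t =O[l] g) (ht' : t' =O[l] g)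
    (hg : Tendsto g l (𝓝 0)) (hj : j ≠ 0) :
    (fun x => t x * ((f - p * t' x * h) / (t x * h + j)) + t' x * p) =O[l] g := by
  have hγ : Tendsto (fun x => (f - p * t' x * h) / (t x * h + j)) l (𝓝 (f / j)) := by
    simpa [div_eq_mul_inv] using (tendsto_const_nhds.sub
      (((ht'.trans_tendsto hg).const_mul p).mul_const h)).mul
      ((tendsto_mul_add_of_isBigO h j ht hg).inv₀ hj)
  have htγ : (fun x => t x * ((f - p * t' x * h) / (t x * h + j))) =O[l] g := by
    simpa using ht.mul (hγ.isBigO_one ℝ)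
  have ht'p : (fun x => t' x * p) =O[l] g := by
    simpa [mul_comm] using ht'.const_mul_left p
  exact htγ.add ht'p

end Coefficients

theorem isBigORho_of_isBigO {F : ℝ → ℂ} {m : ℕ} (h : F =O[𝓝[>] 0] fun ρ => ρ ^ m) :
    IsBigORho F m := by
  obtain ⟨C, hC⟩ := h.bound
  obtain ⟨δ, hδ, hF⟩ := (nhdsGT_basis 0).eventually_iff.mp hC
  refine ⟨max C 1, by positivity, δ, hδ, fun ρ hρ hρδ => ?_⟩
  have := hF ⟨hρ, hρδ⟩
  rw [Real.norm_of_nonneg (by positivity)] at this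
  rw [Real.rpow_natCast]
  exact this.trans (by gcongr; exact le_max_left _ _)

/-- With a point source of radiating coefficient `p` in the cloaked
region, the exterior coefficients `γ(ρ) = (f − p t₁′(ρ)h_n(2ω))/(t₁(ρ)h_n(2ω)+j_n(2ω))`
and `c(ρ) = t₁(ρ)γ(ρ) + t₁′(ρ)p` satisfy `a − γ(ρ) = O(ρ^{n+1})` and
`c(ρ) = O(ρ^{n+1})`: the boundary-data perturbation still vanishes as `ρ → 0⁺`, but one
order worse in `ρ` than the source-free rate `O(ρ^{2n+1})`. -/
theorem boundary_perturbation_with_source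
    (ω ε₀ μ₀ : ℝ) (hω : 0 < ω) (hε : 0 < ε₀) (hμ : 0 < μ₀)
    (n : ℕ) (hn : 1 ≤ n) (k : ℝ) (hk : k = Real.sqrt (ε₀ * μ₀))
    (hj2 : sbj n ((2 * ω : ℝ) : ℂ) ≠ 0) (hjk : sbj n ((k * ω : ℝ) : ℂ) ≠ 0)
    (f p : ℂ)
    (a : ℂ) (ha : a = f / sbj n ((2 * ω : ℝ) : ℂ))
    (γ : ℝ → ℂ) (hγ : ∀ ρ : ℝ, γ ρ =
      (f - p * t1' n ω ε₀ μ₀ k ρ * sbh n ((2 * ω : ℝ) : ℂ)) /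
        (t1 n ω ε₀ μ₀ k ρ * sbh n ((2 * ω : ℝ) : ℂ) + sbj n ((2 * ω : ℝ) : ℂ)))
    (c : ℝ → ℂ) (hc : ∀ ρ : ℝ, c ρ = t1 n ω ε₀ μ₀ k ρ * γ ρ + t1' n ω ε₀ μ₀ k ρ * p) :
    IsBigORho (fun ρ => a - γ ρ) ((n : ℝ) + 1) ∧
    IsBigORho c ((n : ℝ) + 1) := by
  have hk0 : k ≠ 0 := by
    rw [hk]
    exact (Real.sqrt_pos.mpr (mul_pos hε hμ)).ne'
  obtain ⟨ht1, ht1'⟩ := isBigO_t1_and_t1' (μ₀ := μ₀) hn hω.ne' hε hk0 hjk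
  have ht1_weak : t1 n ω ε₀ μ₀ k =O[𝓝[>] 0] fun ρ => ρ ^ (n + 1) :=
    ht1.trans ((isLittleO_pow_pow (by omega)).isBigO.mono nhdsWithin_le_nhds)
  have hpow : Tendsto (fun ρ : ℝ => ρ ^ (n + 1)) (𝓝[>] 0) (𝓝 0) :=
    ((continuous_pow (n + 1)).tendsto' 0 0 (by simp)).mono_left nhdsWithin_le_nhds
  rw [show (n : ℝ) + 1 = ((n + 1 : ℕ) : ℝ) by push_cast; ring, ha, funext hc, funext hγ]
  exact ⟨isBigORho_of_isBigO (isBigO_div_sub_div f p _ _ ht1_weak ht1' hpow hj2),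
    isBigORho_of_isBigO (isBigO_mul_div_add_mul f p _ _ ht1_weak ht1' hpow hj2)⟩
end
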